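/- arXiv:2408.01359 — 9 statements merged into one kernel-verified Lean document; each statement's English description precedes it below -/
import Mathlib

section
/- Assume C is functorially finite in mod Λ and has enough C-projectives and enough C-injectives. Then S(C) and F(C) are functorially finite subcategories of the arrow category of mod Λ: every morphism of finite-dimensional Λ-modules admits both a right and a left S(C)-approximation, and both a right and a left F(C)-approximation, in the arrow category of mod Λ. -/
open CategoryTheory CategoryTheory.Limits

universe u

section Defs
variable {Λ : Type u} [Ring Λ]

/-- A short exact sequence `0 → X → Y → Z → 0` of Λ-modules. -/
def ShortExactSeq {X Y Z : ModuleCat.{u} Λ} (f : X ⟶ Y) (g : Y ⟶ Z) : Prop :=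
  Function.Injective f ∧ Function.Surjective g ∧ Function.Exact f g

variable (C : Set (ModuleCat.{u} Λ))

/-- An inflation of the exact category `C`: an injective map between objects of `C`
whose cokernel lies in `C`. -/
def IsInflation {X Y : ModuleCat.{u} Λ} (f : X ⟶ Y) : Prop :=
  X ∈ C ∧ Y ∈ C ∧ Function.Injective f ∧ ∃ Z ∈ C, ∃ g : Y ⟶ Z, ShortExactSeq f g

/-- A deflation of the exact category `C`: a surjective map between objects of `C`
whose kernel lies in `C`. -/
def IsDeflation {X Y : ModuleCat.{u} Λ} (f : X ⟶ Y) : Prop :=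
  X ∈ C ∧ Y ∈ C ∧ Function.Surjective f ∧ ∃ Z ∈ C, ∃ g : Z ⟶ X, ShortExactSeq g f

/-- The monomorphism category `S(C)`, as a subcategory of the arrow category. -/
def SMono : Set (Arrow (ModuleCat.{u} Λ)) := {a | IsInflation C a.hom}

/-- The epimorphism category `F(C)`, as a subcategory of the arrow category. -/
def FEpi : Set (Arrow (ModuleCat.{u} Λ)) := {a | IsDeflation C a.hom}

/-- `I` is a `C`-injective object. -/
def CInjective (I : ModuleCat.{u} Λ) : Prop :=
  I ∈ C ∧ ∀ (U V : ModuleCat.{u} Λ), U ∈ C → V ∈ C →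
    ∀ (f : I ⟶ U) (g : U ⟶ V), ShortExactSeq f g → ∃ r : U ⟶ I, f ≫ r = 𝟙 I

/-- `P` is a `C`-projective object. -/
def CProjective (P : ModuleCat.{u} Λ) : Prop :=
  P ∈ C ∧ ∀ (U V : ModuleCat.{u} Λ), U ∈ C → V ∈ C →
    ∀ (f : U ⟶ V) (g : V ⟶ P), ShortExactSeq f g → ∃ s : P ⟶ V, s ≫ g = 𝟙 P

/-- `C` has enough `C`-injectives. -/
def EnoughCInjectives : Prop :=
  ∀ X ∈ C, ∃ (I X' : ModuleCat.{u} Λ), CInjective C I ∧ X' ∈ C ∧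
    ∃ (e : X ⟶ I) (q : I ⟶ X'), ShortExactSeq e q

/-- `C` has enough `C`-projectives. -/
def EnoughCProjectives : Prop :=
  ∀ X ∈ C, ∃ (P X' : ModuleCat.{u} Λ), CProjective C P ∧ X' ∈ C ∧
    ∃ (q : X' ⟶ P) (p : P ⟶ X), ShortExactSeq q p

def ClosedUnderIso : Prop := ∀ (M N : ModuleCat.{u} Λ), (M ≅ N) → M ∈ C → N ∈ C
def ContainsZero : Prop := ∀ M : ModuleCat.{u} Λ, Subsingleton M → M ∈ C
def ClosedUnderSums : Prop := ∀ M N : ModuleCat.{u} Λ, M ∈ C → N ∈ C → (M ⊞ N) ∈ C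
def ClosedUnderExtensions : Prop :=
  ∀ (X Y Z : ModuleCat.{u} Λ) (f : X ⟶ Y) (g : Y ⟶ Z),
    X ∈ C → Z ∈ C → ShortExactSeq f g → Y ∈ C

end Defs

section Approx
variable {A : Type*} [Category A] (D : Set A)

/-- `g : Y ⟶ Z` is a right `D`-approximation of `Z`. -/
def IsRightApprox {Y Z : A} (g : Y ⟶ Z) : Prop :=
  Y ∈ D ∧ ∀ W ∈ D, ∀ u : W ⟶ Z, ∃ v : W ⟶ Y, v ≫ g = u

/-- `g : Z ⟶ Y` is a left `D`-approximation of `Z`. -/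
def IsLeftApprox {Z Y : A} (g : Z ⟶ Y) : Prop :=
  Y ∈ D ∧ ∀ W ∈ D, ∀ u : Z ⟶ W, ∃ v : Y ⟶ W, g ≫ v = u

end Approx

section Finiteness
variable {Λ : Type u} [Ring Λ]

/-- Contravariant finiteness of `C` in `mod Λ` (the finite-dimensional Λ-modules). -/
def ContravariantlyFinite (C : Set (ModuleCat.{u} Λ)) : Prop :=
  ∀ M : ModuleCat.{u} Λ, Module.Finite Λ M →
    ∃ (Y : ModuleCat.{u} Λ) (g : Y ⟶ M), IsRightApprox C g

/-- Covariant finiteness of `C` in `mod Λ`. -/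
def CovariantlyFinite (C : Set (ModuleCat.{u} Λ)) : Prop :=
  ∀ M : ModuleCat.{u} Λ, Module.Finite Λ M →
    ∃ (Y : ModuleCat.{u} Λ) (g : M ⟶ Y), IsLeftApprox C g

end Finiteness

/-!
Every arrow `f : X ⟶ Y` has a right approximation by an arrow between objects of `C`: approximate
`Y` by `C_Y`, then the pullback `X ×_Y C_Y` by `C_P`. An arrow `g : U ⟶ V` between objects of `C`
is right-approximated in `S(C)` by `(e, g) : U ⟶ I ⊕ V`, where `e` is an inflation into a
`C`-injective: `C`-injectives extend maps along inflations. Right approximations compose, which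
gives right `S(C)`-approximations. A right `F(C)`-approximation of `f` is the cokernel of a right
`S(C)`-approximation of `ker f ⟶ X`, because morphisms from a deflation to `f` are the same as
morphisms from its kernel inclusion to `ker f ⟶ X`. Left approximations are obtained dually, with
pushouts, `C`-projectives and the cokernel projection `Y ⟶ coker f`.
-/

section LinearAlgebra
variable {R : Type*} [Ring R] {M N P : Type*} [AddCommGroup M] [AddCommGroup N] [AddCommGroup P]
  [Module R M] [Module R N] [Module R P]

theorem LinearMap.exists_comp_eq_of_surjective_of_ker_le (g : M →ₗ[R] N)
    (hg : Function.Surjective g) (φ : M →ₗ[R] P) (h : LinearMap.ker g ≤ LinearMap.ker φ) :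
    ∃ ψ : N →ₗ[R] P, ψ ∘ₗ g = φ :=
  ⟨(LinearMap.ker g).liftQ φ h ∘ₗ (g.quotKerEquivOfSurjective hg).symm.toLinearMap, by
    ext x
    simp [LinearMap.quotKerEquivOfSurjective_symm_apply]⟩

theorem LinearMap.exists_comp_eq_of_injective_of_range_le (m : M →ₗ[R] N)
    (hm : Function.Injective m) (φ : P →ₗ[R] N) (h : LinearMap.range φ ≤ LinearMap.range m) :
    ∃ ψ : P →ₗ[R] M, m ∘ₗ ψ = φ :=
  ⟨(LinearEquiv.ofInjective m hm).symm.toLinearMap ∘ₗ φ.codRestrict _ (fun x => h ⟨x, rfl⟩), by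
    ext x
    simp [← LinearEquiv.ofInjective_apply (h := hm)]⟩

end LinearAlgebra

section ShortExact
variable {Λ : Type u} [Ring Λ]

theorem ShortExactSeq.apply_apply_eq_zero {X Y Z : ModuleCat.{u} Λ} {f : X ⟶ Y} {g : Y ⟶ Z}
    (h : ShortExactSeq f g) (x : X) : g (f x) = 0 :=
  h.2.2.apply_apply_eq_zero x

theorem shortExactSeq_mkQ_range {M N : Type u} [AddCommGroup M] [AddCommGroup N] [Module Λ M]
    [Module Λ N] (φ : M →ₗ[Λ] N) (hφ : Function.Injective φ) :
    ShortExactSeq (ModuleCat.ofHom φ) (ModuleCat.ofHom (LinearMap.range φ).mkQ) :=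
  ⟨hφ, Submodule.mkQ_surjective _, LinearMap.exact_map_mkQ_range φ⟩

theorem shortExactSeq_subtype_ker {M N : Type u} [AddCommGroup M] [AddCommGroup N] [Module Λ M]
    [Module Λ N] (ψ : N →ₗ[Λ] M) (hψ : Function.Surjective ψ) :
    ShortExactSeq (ModuleCat.ofHom (LinearMap.ker ψ).subtype) (ModuleCat.ofHom ψ) :=
  ⟨Submodule.injective_subtype _, hψ, LinearMap.exact_subtype_ker_map ψ⟩

/-- The quotient `(W × U) ⧸ range (α.prod β)` is the pushout of `α` and `-β`. -/
theorem ShortExactSeq.exists_pushout {V W U X : ModuleCat.{u} Λ} {α : V ⟶ W} {q : W ⟶ X}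
    (h : ShortExactSeq α q) (β : V ⟶ U) :
    ∃ τ : ModuleCat.of Λ ((W × U) ⧸ LinearMap.range (α.hom.prod β.hom)) ⟶ X,
      ShortExactSeq
        (ModuleCat.ofHom ((LinearMap.range (α.hom.prod β.hom)).mkQ ∘ₗ LinearMap.inr Λ W U)) τ := by
  set R := LinearMap.range (α.hom.prod β.hom)
  have hR : R ≤ LinearMap.ker (q.hom ∘ₗ LinearMap.fst Λ W U) := by
    rintro _ ⟨v, rfl⟩
    exact h.apply_apply_eq_zero v
  refine ⟨ModuleCat.ofHom (R.liftQ _ hR), ?_, ?_, ?_⟩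
  · refine (injective_iff_map_eq_zero _).2 fun x hx => ?_
    obtain ⟨v, hv⟩ := (Submodule.Quotient.mk_eq_zero R).1 hx
    obtain ⟨hαv, hβv⟩ := Prod.ext_iff.1 hv
    have hv0 : v = 0 := h.1 (hαv.trans (map_zero α.hom).symm)
    simpa [hv0] using hβv.symm
  · intro y
    obtain ⟨w, rfl⟩ := h.2.1 y
    exact ⟨Submodule.Quotient.mk (w, 0), rfl⟩
  · intro z
    obtain ⟨⟨w, x⟩, rfl⟩ := Submodule.Quotient.mk_surjective R z
    constructor
    · intro hw
      obtain ⟨v, rfl⟩ := (h.2.2 w).1 hw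
      refine ⟨x - β v, (Submodule.Quotient.eq R).2 ⟨-v, ?_⟩⟩
      simp
    · rintro ⟨x', hx'⟩
      rw [← hx']
      exact map_zero q.hom

/-- The submodule `ker (p.coprod γ)` of `W × U` is the pullback of `p` and `-γ`. -/
theorem ShortExactSeq.exists_pullback {K W V U : ModuleCat.{u} Λ} {ι : K ⟶ W} {p : W ⟶ V}
    (h : ShortExactSeq ι p) (γ : U ⟶ V) :
    ∃ κ : K ⟶ ModuleCat.of Λ (LinearMap.ker (p.hom.coprod γ.hom)),
      ShortExactSeq κ
        (ModuleCat.ofHom (LinearMap.snd Λ W U ∘ₗ (LinearMap.ker (p.hom.coprod γ.hom)).subtype)) := by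
  have hκ : ∀ x, (ι x, (0 : U)) ∈ LinearMap.ker (p.hom.coprod γ.hom) := fun x => by
    simpa using h.apply_apply_eq_zero x
  refine ⟨ModuleCat.ofHom (LinearMap.codRestrict _ ((LinearMap.inl Λ W U) ∘ₗ ι.hom) hκ),
    fun x y hxy => h.1 (congrArg (fun z => z.1.1) hxy), ?_, ?_⟩
  · intro y
    obtain ⟨w, hw⟩ := h.2.1 (-γ y)
    exact ⟨⟨(w, y), by simp [hw]⟩, rfl⟩
  · rintro ⟨⟨w, y⟩, hwy⟩
    constructor
    · intro (hy : y = 0)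
      subst hy
      obtain ⟨x, rfl⟩ := (h.2.2 w).1 (by simpa using hwy)
      exact ⟨x, rfl⟩
    · rintro ⟨x, hx⟩
      rw [← hx]
      rfl

end ShortExact

section ExactCategory
variable {Λ : Type u} [Ring Λ] {C : Set (ModuleCat.{u} Λ)}

theorem ShortExactSeq.isInflation {X Y Z : ModuleCat.{u} Λ} {f : X ⟶ Y} {g : Y ⟶ Z}
    (h : ShortExactSeq f g) (hX : X ∈ C) (hY : Y ∈ C) (hZ : Z ∈ C) : IsInflation C f :=
  ⟨hX, hY, h.1, Z, hZ, g, h⟩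

theorem ShortExactSeq.isDeflation {X Y Z : ModuleCat.{u} Λ} {f : X ⟶ Y} {g : Y ⟶ Z}
    (h : ShortExactSeq f g) (hX : X ∈ C) (hY : Y ∈ C) (hZ : Z ∈ C) : IsDeflation C g :=
  ⟨hY, hZ, h.2.1, X, hX, f, h⟩

theorem ClosedUnderSums.prod_mem (hCiso : ClosedUnderIso C) (hCsum : ClosedUnderSums C)
    {M N : ModuleCat.{u} Λ} (hM : M ∈ C) (hN : N ∈ C) : ModuleCat.of Λ (M × N) ∈ C :=
  hCiso _ _ (ModuleCat.biprodIsoProd M N) (hCsum M N hM hN)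

theorem ClosedUnderExtensions.pushout_mem (hCext : ClosedUnderExtensions C)
    {V W U X : ModuleCat.{u} Λ} {α : V ⟶ W} {q : W ⟶ X} (h : ShortExactSeq α q) (β : V ⟶ U)
    (hU : U ∈ C) (hX : X ∈ C) :
    ModuleCat.of Λ ((W × U) ⧸ LinearMap.range (α.hom.prod β.hom)) ∈ C :=
  have ⟨_, hτ⟩ := h.exists_pushout β
  hCext _ _ _ _ _ hU hX hτ

theorem ClosedUnderExtensions.pullback_mem (hCext : ClosedUnderExtensions C)
    {K W V U : ModuleCat.{u} Λ} {ι : K ⟶ W} {p : W ⟶ V} (h : ShortExactSeq ι p) (γ : U ⟶ V)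
    (hK : K ∈ C) (hU : U ∈ C) :
    ModuleCat.of Λ (LinearMap.ker (p.hom.coprod γ.hom)) ∈ C :=
  have ⟨_, hκ⟩ := h.exists_pullback γ
  hCext _ _ _ _ _ hK hU hκ

theorem CInjective.exists_comp_eq (hCext : ClosedUnderExtensions C) {I A B Z : ModuleCat.{u} Λ}
    (hI : CInjective C I) {u : A ⟶ B} {σ : B ⟶ Z} (h : ShortExactSeq u σ) (hZ : Z ∈ C)
    (t : A ⟶ I) : ∃ w : B ⟶ I, u ≫ w = t := by
  obtain ⟨τ, hτ⟩ := h.exists_pushout (-t)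
  obtain ⟨r, hr⟩ := hI.2 _ _ (hCext _ _ _ _ _ hI.1 hZ hτ) hZ _ _ hτ
  let R := LinearMap.range (u.hom.prod (-t).hom)
  refine ⟨ModuleCat.ofHom (R.mkQ ∘ₗ LinearMap.inl Λ B I) ≫ r, ?_⟩
  ext a
  have hmk : (Submodule.Quotient.mk (u a, 0) : (B × I) ⧸ R) = Submodule.Quotient.mk (0, t a) :=
    (Submodule.Quotient.eq R).2 ⟨a, by simp⟩
  simpa [hmk] using ConcreteCategory.congr_hom hr (t a)

theorem CProjective.exists_comp_eq (hCext : ClosedUnderExtensions C) {P K A B : ModuleCat.{u} Λ}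
    (hP : CProjective C P) {ι : K ⟶ A} {m : A ⟶ B} (h : ShortExactSeq ι m) (hK : K ∈ C)
    (t : P ⟶ B) : ∃ r : P ⟶ A, r ≫ m = t := by
  obtain ⟨κ, hκ⟩ := h.exists_pullback (-t)
  obtain ⟨s, hs⟩ := hP.2 _ _ hK (hCext _ _ _ _ _ hK hP.1 hκ) _ _ hκ
  refine ⟨s ≫ ModuleCat.ofHom (LinearMap.fst Λ A P ∘ₗ Submodule.subtype _), ?_⟩
  ext x
  have hsx := (s x).2
  have hsnd : ((s x : A × P)).2 = x := ConcreteCategory.congr_hom hs x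
  simp only [LinearMap.mem_ker, LinearMap.coprod_apply, hsnd] at hsx
  simpa [sub_eq_zero, ← sub_eq_add_neg] using hsx

end ExactCategory

section Approximation
variable {A : Type*} [Category A] {D D' : Set A}

theorem IsRightApprox.comp {X Y Z : A} {g : Y ⟶ Z} {g' : X ⟶ Y} (hg : IsRightApprox D g)
    (hg' : IsRightApprox D' g') (hD : D' ⊆ D) : IsRightApprox D' (g' ≫ g) := by
  refine ⟨hg'.1, fun W hW u => ?_⟩
  obtain ⟨v, rfl⟩ := hg.2 W (hD hW) u
  obtain ⟨v', rfl⟩ := hg'.2 W hW v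
  exact ⟨v', (Category.assoc _ _ _).symm⟩

theorem IsLeftApprox.comp {X Y Z : A} {g : X ⟶ Y} {g' : Y ⟶ Z} (hg : IsLeftApprox D g)
    (hg' : IsLeftApprox D' g') (hD : D' ⊆ D) : IsLeftApprox D' (g ≫ g') := by
  refine ⟨hg'.1, fun W hW u => ?_⟩
  obtain ⟨v, rfl⟩ := hg.2 W (hD hW) u
  obtain ⟨v', rfl⟩ := hg'.2 W hW v
  exact ⟨v', Category.assoc _ _ _⟩

end Approximation

section MorphismCategory
variable {Λ : Type u} [Ring Λ] {C : Set (ModuleCat.{u} Λ)}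

variable (C) in
def Mor : Set (Arrow (ModuleCat.{u} Λ)) := {a | a.left ∈ C ∧ a.right ∈ C}

theorem sMono_subset_mor : SMono C ⊆ Mor C := fun _ h => ⟨h.1, h.2.1⟩

theorem fEpi_subset_mor : FEpi C ⊆ Mor C := fun _ h => ⟨h.1, h.2.1⟩

theorem exists_isRightApprox_mor [IsNoetherianRing Λ] (hCfd : ∀ M ∈ C, Module.Finite Λ M)
    (hC : ContravariantlyFinite C) (a : Arrow (ModuleCat.{u} Λ)) (hl : Module.Finite Λ a.left)
    (hr : Module.Finite Λ a.right) :
    ∃ (b : Arrow (ModuleCat.{u} Λ)) (g : b ⟶ a), IsRightApprox (Mor C) g := by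
  obtain ⟨CY, cY, hCY, hcY⟩ := hC a.right hr
  have := hCfd CY hCY
  let Pb := LinearMap.ker (a.hom.hom.coprod (-cY.hom))
  have mem_Pb : ∀ z : a.left × CY, z ∈ Pb ↔ a.hom z.1 = cY z.2 := fun z => by
    simp [Pb, add_neg_eq_zero]
  obtain ⟨CP, cP, hCP, hcP⟩ := hC (ModuleCat.of Λ Pb) inferInstance
  let pl : CP ⟶ a.left := cP ≫ ModuleCat.ofHom (LinearMap.fst _ _ _ ∘ₗ Pb.subtype)
  let pr : CP ⟶ CY := cP ≫ ModuleCat.ofHom (LinearMap.snd _ _ _ ∘ₗ Pb.subtype)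
  have hsq : pl ≫ a.hom = pr ≫ cY := by
    ext x
    exact (mem_Pb _).1 (cP x).2
  refine ⟨Arrow.mk pr, Arrow.homMk pl cY hsq, ⟨hCP, hCY⟩, ?_⟩
  rintro W ⟨hWl, hWr⟩ u
  obtain ⟨h, hh⟩ := hcY W.right hWr u.right
  have hmem : ∀ x, (u.left x, h (W.hom x)) ∈ Pb := fun x => (mem_Pb _).2 <| by
    change a.hom (u.left x) = (h ≫ cY) (W.hom x)
    rw [hh]
    exact ConcreteCategory.congr_hom (Arrow.w u) x
  obtain ⟨v, hv⟩ := hcP W.left hWl (ModuleCat.ofHom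
    (LinearMap.codRestrict Pb (u.left.hom.prod (h.hom ∘ₗ W.hom.hom)) hmem))
  have hv' : ∀ x, ((cP (v x) : Pb) : a.left × CY) = (u.left x, h (W.hom x)) := fun x =>
    congrArg Subtype.val (ConcreteCategory.congr_hom hv x)
  refine ⟨Arrow.homMk v h ?_, Arrow.hom_ext _ _ ?_ hh⟩
  · ext x
    exact congrArg Prod.snd (hv' x)
  · ext x
    exact congrArg Prod.fst (hv' x)

theorem exists_isLeftApprox_mor (hCfd : ∀ M ∈ C, Module.Finite Λ M)
    (hC : CovariantlyFinite C) (a : Arrow (ModuleCat.{u} Λ)) (hl : Module.Finite Λ a.left)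
    (hr : Module.Finite Λ a.right) :
    ∃ (b : Arrow (ModuleCat.{u} Λ)) (g : a ⟶ b), IsLeftApprox (Mor C) g := by
  obtain ⟨CX, cX, hCX, hcX⟩ := hC a.left hl
  have := hCfd CX hCX
  let Po := LinearMap.range (cX.hom.prod (-a.hom.hom))
  obtain ⟨CQ, cQ, hCQ, hcQ⟩ := hC (ModuleCat.of Λ ((CX × a.right) ⧸ Po)) inferInstance
  let ql : CX ⟶ CQ := ModuleCat.ofHom (Po.mkQ ∘ₗ LinearMap.inl _ _ _) ≫ cQ
  let qr : a.right ⟶ CQ := ModuleCat.ofHom (Po.mkQ ∘ₗ LinearMap.inr _ _ _) ≫ cQ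
  have hsq : cX ≫ ql = a.hom ≫ qr := by
    ext x
    have hmk : (Submodule.Quotient.mk (cX x, 0) : (CX × a.right) ⧸ Po) =
        Submodule.Quotient.mk (0, a.hom x) :=
      (Submodule.Quotient.eq Po).2 ⟨x, by simp⟩
    exact congrArg cQ hmk
  refine ⟨Arrow.mk ql, Arrow.homMk cX qr hsq, ⟨hCX, hCQ⟩, ?_⟩
  rintro W ⟨hWl, hWr⟩ u
  obtain ⟨h, hh⟩ := hcX W.left hWl u.left
  have hPo : Po ≤ LinearMap.ker ((W.hom.hom ∘ₗ h.hom).coprod u.right.hom) := by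
    rintro _ ⟨x, rfl⟩
    have hx : W.hom ((cX ≫ h) x) = u.right (a.hom x) := by
      rw [hh]
      exact ConcreteCategory.congr_hom (Arrow.w u) x
    change W.hom ((cX ≫ h) x) + u.right (-(a.hom x)) = 0
    rw [hx, map_neg, add_neg_cancel]
  obtain ⟨v, hv⟩ := hcQ W.right hWr (ModuleCat.ofHom (Po.liftQ _ hPo))
  have hv' : ∀ z, v (cQ (Submodule.Quotient.mk z)) = W.hom (h z.1) + u.right z.2 := fun z =>
    ConcreteCategory.congr_hom hv (Submodule.Quotient.mk z)
  refine ⟨Arrow.homMk h v ?_, Arrow.hom_ext _ _ hh ?_⟩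
  · ext x
    have hx := hv' (x, 0)
    rw [map_zero, add_zero] at hx
    exact hx.symm
  · ext y
    have hy := hv' (0, y)
    rw [map_zero, map_zero, zero_add] at hy
    exact hy

end MorphismCategory

section MonoEpiCategory
variable {Λ : Type u} [Ring Λ] {C : Set (ModuleCat.{u} Λ)}

theorem exists_isRightApprox_sMono_of_mem_mor (hCiso : ClosedUnderIso C)
    (hCsum : ClosedUnderSums C) (hCext : ClosedUnderExtensions C) (hCinj : EnoughCInjectives C)
    {a : Arrow (ModuleCat.{u} Λ)} (ha : a ∈ Mor C) :
    ∃ (b : Arrow (ModuleCat.{u} Λ)) (g : b ⟶ a), IsRightApprox (SMono C) g := by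
  obtain ⟨I, X', hI, hX', e, q, heq⟩ := hCinj a.left ha.1
  let j : a.left ⟶ ModuleCat.of Λ (I × a.right) := ModuleCat.ofHom (e.hom.prod a.hom.hom)
  have hj : IsInflation C j :=
    (shortExactSeq_mkQ_range _ fun x y hxy => heq.1 (congrArg Prod.fst hxy)).isInflation ha.1
      (hCsum.prod_mem hCiso hI.1 ha.2) (hCext.pushout_mem heq a.hom ha.2 hX')
  refine ⟨Arrow.mk j, Arrow.homMk (𝟙 _) (ModuleCat.ofHom (LinearMap.snd _ _ _)) rfl, hj, ?_⟩
  rintro W ⟨-, -, -, Z, hZ, σ, hWσ⟩ u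
  obtain ⟨w, hw⟩ := hI.exists_comp_eq hCext hWσ hZ (u.left ≫ e)
  refine ⟨Arrow.homMk u.left (ModuleCat.ofHom (w.hom.prod u.right.hom)) ?_,
    Arrow.hom_ext _ _ (Category.comp_id _) rfl⟩
  ext x
  exact Prod.ext (ConcreteCategory.congr_hom hw x).symm (ConcreteCategory.congr_hom (Arrow.w u) x)

theorem exists_isLeftApprox_fEpi_of_mem_mor (hCiso : ClosedUnderIso C)
    (hCsum : ClosedUnderSums C) (hCext : ClosedUnderExtensions C) (hCproj : EnoughCProjectives C)
    {a : Arrow (ModuleCat.{u} Λ)} (ha : a ∈ Mor C) :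
    ∃ (b : Arrow (ModuleCat.{u} Λ)) (g : a ⟶ b), IsLeftApprox (FEpi C) g := by
  obtain ⟨P, K, hP, hK, ι, p, hseq⟩ := hCproj a.right ha.2
  let d : ModuleCat.of Λ (P × a.left) ⟶ a.right := ModuleCat.ofHom (p.hom.coprod a.hom.hom)
  have hd_surj : Function.Surjective d := fun y =>
    have ⟨x, hx⟩ := hseq.2.1 y
    ⟨(x, 0), by simpa [d] using hx⟩
  have hd : IsDeflation C d :=
    (shortExactSeq_subtype_ker _ hd_surj).isDeflation (hCext.pullback_mem hseq a.hom hK ha.1)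
      (hCsum.prod_mem hCiso hP.1 ha.1) ha.2
  refine ⟨Arrow.mk d, Arrow.homMk (ModuleCat.ofHom (LinearMap.inr _ _ _)) (𝟙 _) ?_, hd, ?_⟩
  · ext y
    simp [d]
  rintro W ⟨-, -, -, K', hK', ιW, hWσ⟩ u
  obtain ⟨r, hr⟩ := hP.exists_comp_eq hCext hWσ hK' (p ≫ u.right)
  refine ⟨Arrow.homMk (ModuleCat.ofHom (r.hom.coprod u.left.hom)) u.right ?_,
    Arrow.hom_ext _ _ ?_ (Category.id_comp _)⟩
  · ext ⟨x, y⟩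
    change W.hom (r x + u.left y) = u.right (p x + a.hom y)
    rw [map_add, map_add]
    exact congrArg₂ (· + ·) (ConcreteCategory.congr_hom hr x)
      (ConcreteCategory.congr_hom (Arrow.w u) y)
  · ext y
    change r 0 + u.left y = u.left y
    rw [map_zero, zero_add]

end MonoEpiCategory

section KernelsAndCokernels
variable {Λ : Type u} [Ring Λ] {C : Set (ModuleCat.{u} Λ)}

theorem exists_isRightApprox_fEpi_of_ker {a b : Arrow (ModuleCat.{u} Λ)}
    (g : b ⟶ Arrow.mk (ModuleCat.ofHom (LinearMap.ker a.hom.hom).subtype))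
    (hg : IsRightApprox (SMono C) g) :
    ∃ (b' : Arrow (ModuleCat.{u} Λ)) (g' : b' ⟶ a), IsRightApprox (FEpi C) g' := by
  obtain ⟨⟨hbl, hbr, -, Z, hZ, σ, hbσ⟩, hg⟩ := hg
  have hσ : LinearMap.ker σ.hom ≤ LinearMap.ker (g.right ≫ a.hom).hom := by
    intro y (hy : σ y = 0)
    obtain ⟨x, rfl⟩ := (hbσ.2.2 y).1 hy
    change a.hom ((b.hom ≫ g.right) x) = 0
    rw [← Arrow.w g]
    exact (g.left x).2
  obtain ⟨ψ, hψ⟩ := LinearMap.exists_comp_eq_of_surjective_of_ker_le _ hbσ.2.1 _ hσ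
  refine ⟨Arrow.mk σ, Arrow.homMk g.right (ModuleCat.ofHom ψ) (by ext; exact (LinearMap.congr_fun hψ _).symm), hbσ.isDeflation hbl hbr hZ, ?_⟩
  rintro W ⟨hWl, hWr, -, K, hK, ι, hWι⟩ u
  have hι : ∀ x, u.left (ι x) ∈ LinearMap.ker a.hom.hom := fun x => by
    change (ι ≫ u.left ≫ a.hom) x = 0
    rw [Arrow.w u]
    exact congrArg u.right (hWι.apply_apply_eq_zero x) |>.trans (map_zero _)
  obtain ⟨v, hv⟩ := hg _ (hWι.isInflation hK hWl hWr)
    (Arrow.homMk (f := Arrow.mk ι) (g := Arrow.mk (ModuleCat.ofHom (LinearMap.ker a.hom.hom).subtype))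
      (ModuleCat.ofHom (LinearMap.codRestrict _ (u.left.hom ∘ₗ ι.hom) hι)) u.left rfl)
  have hv_right : v.right ≫ g.right = u.left := congrArg Arrow.Hom.right hv
  have hW : LinearMap.ker W.hom.hom ≤ LinearMap.ker (v.right ≫ σ).hom := by
    intro y (hy : W.hom y = 0)
    obtain ⟨x, rfl⟩ := (hWι.2.2 y).1 hy
    change σ (((Arrow.mk ι).hom ≫ v.right) x) = 0
    rw [← Arrow.w v]
    exact hbσ.apply_apply_eq_zero _
  obtain ⟨χ, hχ⟩ := LinearMap.exists_comp_eq_of_surjective_of_ker_le _ hWι.2.1 _ hW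
  refine ⟨Arrow.homMk v.right (ModuleCat.ofHom χ) (by ext; exact (LinearMap.congr_fun hχ _).symm), Arrow.hom_ext _ _ hv_right ?_⟩
  ext y
  obtain ⟨x, rfl⟩ := hWι.2.1 y
  calc ψ (χ (W.hom x)) = ψ (σ (v.right x)) := congrArg ψ (LinearMap.congr_fun hχ x)
    _ = a.hom ((v.right ≫ g.right) x) := LinearMap.congr_fun hψ _
    _ = a.hom (u.left x) := by rw [hv_right]
    _ = u.right (W.hom x) := ConcreteCategory.congr_hom (Arrow.w u) x

theorem exists_isLeftApprox_sMono_of_coker {a b : Arrow (ModuleCat.{u} Λ)}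
    (g : Arrow.mk (ModuleCat.ofHom (LinearMap.range a.hom.hom).mkQ) ⟶ b)
    (hg : IsLeftApprox (FEpi C) g) :
    ∃ (b' : Arrow (ModuleCat.{u} Λ)) (g' : a ⟶ b'), IsLeftApprox (SMono C) g' := by
  obtain ⟨⟨hbl, hbr, -, U, hU, ι, hιb⟩, hg⟩ := hg
  have hι : LinearMap.range (a.hom ≫ g.left).hom ≤ LinearMap.range ι.hom := by
    rintro _ ⟨x, rfl⟩
    refine (hιb.2.2 _).1 ?_
    change ((g.left ≫ b.hom)) (a.hom x) = 0
    rw [Arrow.w g]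
    exact congrArg g.right ((Submodule.Quotient.mk_eq_zero _).2 ⟨x, rfl⟩) |>.trans (map_zero _)
  obtain ⟨φ, hφ⟩ := LinearMap.exists_comp_eq_of_injective_of_range_le _ hιb.1 _ hι
  refine ⟨Arrow.mk ι, Arrow.homMk (ModuleCat.ofHom φ) g.left (by ext; exact LinearMap.congr_fun hφ _), hιb.isInflation hU hbl hbr, ?_⟩
  rintro W ⟨hWl, hWr, hWinj, Z, hZ, σ, hWσ⟩ u
  have hσ : LinearMap.range a.hom.hom ≤ LinearMap.ker (u.right ≫ σ).hom := by
    rintro _ ⟨x, rfl⟩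
    change σ ((a.hom ≫ u.right) x) = 0
    rw [← Arrow.w u]
    exact hWσ.apply_apply_eq_zero _
  obtain ⟨v, hv⟩ := hg _ (hWσ.isDeflation hWl hWr hZ)
    (Arrow.homMk (f := Arrow.mk (ModuleCat.ofHom (LinearMap.range a.hom.hom).mkQ)) (g := Arrow.mk σ)
      u.right (ModuleCat.ofHom ((LinearMap.range a.hom.hom).liftQ _ hσ)) rfl)
  have hv_left : g.left ≫ v.left = u.right := congrArg Arrow.Hom.left hv
  have hW : LinearMap.range (ι ≫ v.left).hom ≤ LinearMap.range W.hom.hom := by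
    rintro _ ⟨x, rfl⟩
    refine (hWσ.2.2 _).1 ?_
    change (v.left ≫ (Arrow.mk σ).hom) (ι x) = 0
    rw [Arrow.w v]
    exact congrArg v.right (hιb.apply_apply_eq_zero x) |>.trans (map_zero _)
  obtain ⟨χ, hχ⟩ := LinearMap.exists_comp_eq_of_injective_of_range_le _ hWinj _ hW
  refine ⟨Arrow.homMk (ModuleCat.ofHom χ) v.left (by ext; exact LinearMap.congr_fun hχ _),
    Arrow.hom_ext _ _ ?_ hv_left⟩
  ext x
  apply hWinj
  calc W.hom (χ (φ x)) = v.left (ι (φ x)) := LinearMap.congr_fun hχ _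
    _ = (g.left ≫ v.left) (a.hom x) := congrArg v.left (LinearMap.congr_fun hφ x)
    _ = u.right (a.hom x) := by rw [hv_left]
    _ = W.hom (u.left x) := (ConcreteCategory.congr_hom (Arrow.w u) x).symm

end KernelsAndCokernels

section Approximations
variable {Λ : Type u} [Ring Λ] {C : Set (ModuleCat.{u} Λ)}

theorem exists_isRightApprox_sMono [IsNoetherianRing Λ] (hCfd : ∀ M ∈ C, Module.Finite Λ M)
    (hCiso : ClosedUnderIso C) (hCsum : ClosedUnderSums C) (hCext : ClosedUnderExtensions C)
    (hCcontra : ContravariantlyFinite C) (hCinj : EnoughCInjectives C)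
    (a : Arrow (ModuleCat.{u} Λ)) (hl : Module.Finite Λ a.left) (hr : Module.Finite Λ a.right) :
    ∃ (b : Arrow (ModuleCat.{u} Λ)) (g : b ⟶ a), IsRightApprox (SMono C) g := by
  obtain ⟨_, g, hg⟩ := exists_isRightApprox_mor hCfd hCcontra a hl hr
  obtain ⟨b, g', hg'⟩ := exists_isRightApprox_sMono_of_mem_mor hCiso hCsum hCext hCinj hg.1
  exact ⟨b, g' ≫ g, hg.comp hg' sMono_subset_mor⟩

theorem exists_isLeftApprox_fEpi (hCfd : ∀ M ∈ C, Module.Finite Λ M)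
    (hCiso : ClosedUnderIso C) (hCsum : ClosedUnderSums C) (hCext : ClosedUnderExtensions C)
    (hCcov : CovariantlyFinite C) (hCproj : EnoughCProjectives C)
    (a : Arrow (ModuleCat.{u} Λ)) (hl : Module.Finite Λ a.left) (hr : Module.Finite Λ a.right) :
    ∃ (b : Arrow (ModuleCat.{u} Λ)) (g : a ⟶ b), IsLeftApprox (FEpi C) g := by
  obtain ⟨_, g, hg⟩ := exists_isLeftApprox_mor hCfd hCcov a hl hr
  obtain ⟨b, g', hg'⟩ := exists_isLeftApprox_fEpi_of_mem_mor hCiso hCsum hCext hCproj hg.1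
  exact ⟨b, g ≫ g', hg.comp hg' fEpi_subset_mor⟩

theorem exists_isRightApprox_fEpi [IsNoetherianRing Λ] (hCfd : ∀ M ∈ C, Module.Finite Λ M)
    (hCiso : ClosedUnderIso C) (hCsum : ClosedUnderSums C) (hCext : ClosedUnderExtensions C)
    (hCcontra : ContravariantlyFinite C) (hCinj : EnoughCInjectives C)
    (a : Arrow (ModuleCat.{u} Λ)) (hl : Module.Finite Λ a.left) :
    ∃ (b : Arrow (ModuleCat.{u} Λ)) (g : b ⟶ a), IsRightApprox (FEpi C) g := by
  have := hl
  obtain ⟨_, g, hg⟩ := exists_isRightApprox_sMono hCfd hCiso hCsum hCext hCcontra hCinj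
    (Arrow.mk (ModuleCat.ofHom (LinearMap.ker a.hom.hom).subtype))
    (inferInstanceAs (Module.Finite Λ (LinearMap.ker a.hom.hom))) hl
  exact exists_isRightApprox_fEpi_of_ker g hg

theorem exists_isLeftApprox_sMono (hCfd : ∀ M ∈ C, Module.Finite Λ M)
    (hCiso : ClosedUnderIso C) (hCsum : ClosedUnderSums C) (hCext : ClosedUnderExtensions C)
    (hCcov : CovariantlyFinite C) (hCproj : EnoughCProjectives C)
    (a : Arrow (ModuleCat.{u} Λ)) (hr : Module.Finite Λ a.right) :
    ∃ (b : Arrow (ModuleCat.{u} Λ)) (g : a ⟶ b), IsLeftApprox (SMono C) g := by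
  have := hr
  obtain ⟨_, g, hg⟩ := exists_isLeftApprox_fEpi hCfd hCiso hCsum hCext hCcov hCproj
    (Arrow.mk (ModuleCat.ofHom (LinearMap.range a.hom.hom).mkQ)) hr
    (inferInstanceAs (Module.Finite Λ (a.right ⧸ LinearMap.range a.hom.hom)))
  exact exists_isLeftApprox_sMono_of_coker g hg

end Approximations

theorem smono_fepi_functorially_finite_general
    (k : Type u) [Field k] (Λ : Type u) [Ring Λ] [Algebra k Λ] [FiniteDimensional k Λ]
    (C : Set (ModuleCat.{u} Λ))
    (hCfd : ∀ M ∈ C, Module.Finite Λ M)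
    (hCiso : ClosedUnderIso C)
    (hCsum : ClosedUnderSums C) (hCext : ClosedUnderExtensions C)
    (hCcontra : ContravariantlyFinite C) (hCcov : CovariantlyFinite C)
    (hCproj : EnoughCProjectives C) (hCinj : EnoughCInjectives C) :
    ∀ a : Arrow (ModuleCat.{u} Λ), Module.Finite Λ a.left → Module.Finite Λ a.right →
      (∃ (b : Arrow (ModuleCat.{u} Λ)) (g : b ⟶ a), IsRightApprox (SMono C) g) ∧
      (∃ (b : Arrow (ModuleCat.{u} Λ)) (g : a ⟶ b), IsLeftApprox (SMono C) g) ∧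
      (∃ (b : Arrow (ModuleCat.{u} Λ)) (g : b ⟶ a), IsRightApprox (FEpi C) g) ∧
      (∃ (b : Arrow (ModuleCat.{u} Λ)) (g : a ⟶ b), IsLeftApprox (FEpi C) g) := by
  have : IsNoetherianRing Λ := isNoetherian_of_tower k inferInstance
  intro a hl hr
  exact ⟨exists_isRightApprox_sMono hCfd hCiso hCsum hCext hCcontra hCinj a hl hr,
    exists_isLeftApprox_sMono hCfd hCiso hCsum hCext hCcov hCproj a hr,
    exists_isRightApprox_fEpi hCfd hCiso hCsum hCext hCcontra hCinj a hl,
    exists_isLeftApprox_fEpi hCfd hCiso hCsum hCext hCcov hCproj a hl hr⟩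

/-- If `C` is functorially finite in `mod Λ` with enough `C`-projectives and
`C`-injectives, then `S(C)` and `F(C)` are functorially finite subcategories of the arrow
category of `mod Λ`. -/
theorem smono_fepi_functorially_finite
    (k : Type u) [Field k] (Λ : Type u) [Ring Λ] [Algebra k Λ] [FiniteDimensional k Λ]
    (C : Set (ModuleCat.{u} Λ))
    (hCfd : ∀ M ∈ C, Module.Finite Λ M)
    (hC0 : ContainsZero C) (hCiso : ClosedUnderIso C)
    (hCsum : ClosedUnderSums C) (hCext : ClosedUnderExtensions C)
    (hCcontra : ContravariantlyFinite C) (hCcov : CovariantlyFinite C)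
    (hCproj : EnoughCProjectives C) (hCinj : EnoughCInjectives C) :
    ∀ a : Arrow (ModuleCat.{u} Λ), Module.Finite Λ a.left → Module.Finite Λ a.right →
      (∃ (b : Arrow (ModuleCat.{u} Λ)) (g : b ⟶ a), IsRightApprox (SMono C) g) ∧
      (∃ (b : Arrow (ModuleCat.{u} Λ)) (g : a ⟶ b), IsLeftApprox (SMono C) g) ∧
      (∃ (b : Arrow (ModuleCat.{u} Λ)) (g : b ⟶ a), IsRightApprox (FEpi C) g) ∧
      (∃ (b : Arrow (ModuleCat.{u} Λ)) (g : a ⟶ b), IsLeftApprox (FEpi C) g) :=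
  smono_fepi_functorially_finite_general k Λ C hCfd hCiso hCsum hCext hCcontra hCcov hCproj hCinj
end

section
/- Let C be a full subcategory of mod Λ closed under isomorphisms, and let H(C) denote the full subcategory of the arrow category of mod Λ consisting of all morphisms between objects of C. If C is contravariantly finite in mod Λ, then H(C) is contravariantly finite in the arrow category of mod Λ, i.e., every morphism f : A → B of finite-dimensional Λ-modules admits a right H(C)-approximation; respectively, if C is covariantly finite in mod Λ, then H(C) is covariantly finite in the arrow category of mod Λ. -/
open CategoryTheory CategoryTheory.Limits

universe u

/-- The morphism category `H(C)`: all arrows between objects of `C`. -/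
def HMor {Λ : Type u} [Ring Λ] (C : Set (ModuleCat.{u} Λ)) : Set (Arrow (ModuleCat.{u} Λ)) :=
  {a | a.left ∈ C ∧ a.right ∈ C}

/-!
The approximation of an arrow `f : X ⟶ Y` is built from approximations of objects.
Contravariantly: take a right `C`-approximation `Y' ⟶ Y`, pull `f` back along it to `P`,
and take a right `C`-approximation `X' ⟶ P`; the composite `X' ⟶ P ⟶ Y'` approximates `f`,
because any arrow of `H(C)` mapping to `f` factors first through `Y'` on the right and then,
by the pullback property, through `P` and hence `X'` on the left.
Covariantly one uses the dual pushout construction. Over the Noetherian algebra `Λ`, pullbacks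
and pushouts of finitely generated modules are finitely generated, so all objects involved stay
in `mod Λ`.
-/

namespace CategoryTheory

variable {A : Type*} [Category A] (D : Set A)

theorem IsPullback.isRightApprox_arrowHomMk' {P X Y X' Y' : A} {f : X ⟶ Y} {g : Y' ⟶ Y}
    {fst : P ⟶ X} {snd : P ⟶ Y'} (sq : IsPullback fst snd f g) (hg : IsRightApprox D g)
    {h : X' ⟶ P} (hh : IsRightApprox D h) :
    IsRightApprox {b : Arrow A | b.left ∈ D ∧ b.right ∈ D}
      (Arrow.homMk' (f := h ≫ snd) (g := f) (h ≫ fst) g (by simp [sq.w])) := by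
  refine ⟨⟨hh.1, hg.1⟩, fun W ⟨hWl, hWr⟩ u ↦ ?_⟩
  obtain ⟨vr, hvr⟩ := hg.2 W.right hWr u.right
  let l : W.left ⟶ P := sq.lift u.left (W.hom ≫ vr) (by simp [hvr])
  obtain ⟨vl, hvl⟩ := hh.2 W.left hWl l
  refine ⟨Arrow.homMk vl vr (by simp [reassoc_of% hvl, l]), ?_⟩
  ext
  · simp [reassoc_of% hvl, l]
  · simpa using hvr

theorem IsPushout.isLeftApprox_arrowHomMk' {Q X Y X' Y' : A} {f : X ⟶ Y} {g : X ⟶ X'}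
    {inl : X' ⟶ Q} {inr : Y ⟶ Q} (sq : IsPushout g f inl inr) (hg : IsLeftApprox D g)
    {h : Q ⟶ Y'} (hh : IsLeftApprox D h) :
    IsLeftApprox {b : Arrow A | b.left ∈ D ∧ b.right ∈ D}
      (Arrow.homMk' (f := f) (g := inl ≫ h) g (inr ≫ h) (by simp [sq.w_assoc])) := by
  refine ⟨⟨hg.1, hh.1⟩, fun W ⟨hWl, hWr⟩ u ↦ ?_⟩
  obtain ⟨vl, hvl⟩ := hg.2 W.left hWl u.left
  let d : Q ⟶ W.right := sq.desc (vl ≫ W.hom) u.right (by simp [reassoc_of% hvl])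
  obtain ⟨vr, hvr⟩ := hh.2 W.right hWr d
  refine ⟨Arrow.homMk vl vr (by simp [hvr, d]), ?_⟩
  ext
  · simpa using hvl
  · simp [hvr, d]

end CategoryTheory

namespace ModuleCat

variable {R : Type u} [Ring R]

theorem finite_pullback [IsNoetherianRing R] {X Y Z : ModuleCat.{u} R} (f : X ⟶ Z) (g : Y ⟶ Z)
    [Module.Finite R X] [Module.Finite R Y] : Module.Finite R (pullback f g : ModuleCat.{u} R) := by
  let m := (pullback.fst f g).hom.prod (pullback.snd f g).hom
  have : Mono (ofHom m) := ⟨fun u v huv ↦ pullback.hom_ext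
    (by ext x; exact congr_arg Prod.fst (congr($huv x)))
    (by ext x; exact congr_arg Prod.snd (congr($huv x)))⟩
  exact Module.Finite.of_injective m ((mono_iff_injective _).1 this)

theorem finite_pushout {X Y Z : ModuleCat.{u} R} (f : Z ⟶ X) (g : Z ⟶ Y)
    [Module.Finite R X] [Module.Finite R Y] : Module.Finite R (pushout f g : ModuleCat.{u} R) := by
  let e := (pushout.inl f g).hom.coprod (pushout.inr f g).hom
  have : Epi (ofHom e) := ⟨fun u v huv ↦ pushout.hom_ext
    (by ext x; simpa [e] using congr($huv (x, 0)))
    (by ext y; simpa [e] using congr($huv (0, y)))⟩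
  exact Module.Finite.of_surjective e ((epi_iff_surjective _).1 this)

end ModuleCat

theorem hmor_functorially_finite_general
    (k : Type u) [Field k] (Λ : Type u) [Ring Λ] [Algebra k Λ] [FiniteDimensional k Λ]
    (C : Set (ModuleCat.{u} Λ))
    (hCfd : ∀ M ∈ C, Module.Finite Λ M) :
    (ContravariantlyFinite C →
      ∀ a : Arrow (ModuleCat.{u} Λ), Module.Finite Λ a.left → Module.Finite Λ a.right →
        ∃ (b : Arrow (ModuleCat.{u} Λ)) (g : b ⟶ a), IsRightApprox (HMor C) g) ∧
    (CovariantlyFinite C →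
      ∀ a : Arrow (ModuleCat.{u} Λ), Module.Finite Λ a.left → Module.Finite Λ a.right →
        ∃ (b : Arrow (ModuleCat.{u} Λ)) (g : a ⟶ b), IsLeftApprox (HMor C) g) := by
  have : IsNoetherianRing Λ := isNoetherian_of_tower k inferInstance
  refine ⟨fun hC a _ hY ↦ ?_, fun hC a hX _ ↦ ?_⟩
  · obtain ⟨Y', g, hg⟩ := hC a.right hY
    have := hCfd Y' hg.1
    obtain ⟨X', h, hh⟩ := hC _ (ModuleCat.finite_pullback a.hom g)
    exact ⟨_, _, (IsPullback.of_hasPullback a.hom g).isRightApprox_arrowHomMk' C hg hh⟩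
  · obtain ⟨X', g, hg⟩ := hC a.left hX
    have := hCfd X' hg.1
    obtain ⟨Y', h, hh⟩ := hC _ (ModuleCat.finite_pushout g a.hom)
    exact ⟨_, _, (IsPushout.of_hasPushout g a.hom).isLeftApprox_arrowHomMk' C hg hh⟩

/-- If `C` is contravariantly (resp. covariantly) finite in `mod Λ`, then
`H(C)` is contravariantly (resp. covariantly) finite in the arrow category of `mod Λ`. -/
theorem hmor_functorially_finite
    (k : Type u) [Field k] (Λ : Type u) [Ring Λ] [Algebra k Λ] [FiniteDimensional k Λ]
    (C : Set (ModuleCat.{u} Λ))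
    (hCfd : ∀ M ∈ C, Module.Finite Λ M)
    (hCiso : ClosedUnderIso C) :
    (ContravariantlyFinite C →
      ∀ a : Arrow (ModuleCat.{u} Λ), Module.Finite Λ a.left → Module.Finite Λ a.right →
        ∃ (b : Arrow (ModuleCat.{u} Λ)) (g : b ⟶ a), IsRightApprox (HMor C) g) ∧
    (CovariantlyFinite C →
      ∀ a : Arrow (ModuleCat.{u} Λ), Module.Finite Λ a.left → Module.Finite Λ a.right →
        ∃ (b : Arrow (ModuleCat.{u} Λ)) (g : a ⟶ b), IsLeftApprox (HMor C) g) :=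
  hmor_functorially_finite_general k Λ C hCfd
end

section
/- Assume C has enough C-injectives. Then S(C) is contravariantly finite in the category H(C) of arrows between objects of C: for every Λ-linear map f : X → Y with X, Y ∈ C, there exist a C-injective object I ∈ C and a map e : X → I such that the map (f,e)ᵗ : X → Y ⊕ I (with components f and e) lies in S(C), and the arrow morphism (𝟙_X, [1,0]) : (f,e)ᵗ → f is a right S(C)-approximation of f: for every h : X′ → Y′ in S(C) and every arrow morphism (φ₁, φ₂) : h → f, there exists ψ : Y′ → Y ⊕ I with ψ ∘ h = (f,e)ᵗ ∘ φ₁ and [1,0] ∘ ψ = φ₂. -/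
/-!
The cokernel of `(f, e)ᵗ : X → Y ⊕ I` is the pushout of the inflation `e : X → I` along `f`,
hence an extension of `coker e` by `Y`, so it lies in `C`. For the approximation property one
extends `φ₁ ≫ e` along the inflation `h : X' → Y'`: pushing the conflation `X' → Y' → Z` out
along `φ₁ ≫ e` gives a conflation `I → U → Z`, which splits since `I` is `C`-injective, and a
retraction `U → I` yields the extension `b`. Then `ψ = (φ₂, b)ᵗ`.
-/

open CategoryTheory CategoryTheory.Limits

universe u

namespace LinearMap

section Pushout

variable {R A B M Z : Type*} [Ring R] [AddCommGroup A] [AddCommGroup B] [AddCommGroup M]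
  [AddCommGroup Z] [Module R A] [Module R B] [Module R M] [Module R Z]
  (a : A →ₗ[R] M) (i : A →ₗ[R] B)

/-- `(M × B) ⧸ {(a x, i x)}`: with this sign convention the pushout is literally the cokernel of
`(a, i) : A → M × B`, and the pushout square commutes only up to sign. -/
abbrev Pushout : Type _ := (M × B) ⧸ range (a.prod i)

def pushoutInl : M →ₗ[R] Pushout a i := (range (a.prod i)).mkQ ∘ₗ inl R M B

def pushoutInr : B →ₗ[R] Pushout a i := (range (a.prod i)).mkQ ∘ₗ inr R M B

theorem pushoutInl_apply_eq_neg (x : A) : pushoutInl a i (a x) = -pushoutInr a i (i x) := by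
  rw [eq_neg_iff_add_eq_zero, pushoutInl, pushoutInr, comp_apply, comp_apply, ← map_add,
    Submodule.mkQ_apply, Submodule.Quotient.mk_eq_zero]
  exact ⟨x, by simp⟩

theorem pushoutInl_injective (hi : Function.Injective i) : Function.Injective (pushoutInl a i) := by
  rw [← ker_eq_bot, eq_bot_iff]
  rintro m hm
  obtain ⟨x, hx⟩ := (Submodule.Quotient.mk_eq_zero _).mp hm
  obtain rfl : x = 0 := hi (by simpa using congrArg Prod.snd hx)
  simpa using (congrArg Prod.fst hx).symm

variable {i} {p : B →ₗ[R] Z}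

def pushoutDesc (hip : p ∘ₗ i = 0) : Pushout a i →ₗ[R] Z :=
  (range (a.prod i)).liftQ (p ∘ₗ snd R M B) <| by
    rintro _ ⟨x, rfl⟩
    simpa using congr($hip x)

theorem pushoutDesc_surjective (hip : p ∘ₗ i = 0) (hp : Function.Surjective p) :
    Function.Surjective (pushoutDesc a hip) := fun z ↦
  let ⟨y, hy⟩ := hp z
  ⟨pushoutInr a i y, by simpa [pushoutDesc, pushoutInr] using hy⟩

theorem exact_pushoutInl_pushoutDesc (hexact : Function.Exact i p) :
    Function.Exact (pushoutInl a i) (pushoutDesc a hexact.linearMap_comp_eq_zero) := by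
  intro w
  obtain ⟨⟨m, y⟩, rfl⟩ := Submodule.mkQ_surjective _ w
  refine ⟨fun hy ↦ ?_, ?_⟩
  · obtain ⟨x, rfl⟩ := (hexact y).mp (by simpa [pushoutDesc] using hy)
    refine ⟨m - a x, (Submodule.Quotient.eq _).mpr ⟨-x, ?_⟩⟩
    simp
  · rintro ⟨m', hm'⟩
    simp [← hm', pushoutInl, pushoutDesc]

end Pushout

end LinearMap

section ShortExactSeq

variable {Λ : Type u} [Ring Λ]

open LinearMap

theorem ShortExactSeq.pushout {A B Z M : ModuleCat.{u} Λ} {i : A ⟶ B} {p : B ⟶ Z}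
    (hs : ShortExactSeq i p) (a : A ⟶ M) :
    ShortExactSeq (X := M) (Y := ModuleCat.of Λ (Pushout a.hom i.hom))
      (ModuleCat.ofHom (pushoutInl a.hom i.hom))
      (ModuleCat.ofHom
        (pushoutDesc a.hom (hs.2.2 : Function.Exact i.hom p.hom).linearMap_comp_eq_zero)) :=
  have hexact : Function.Exact i.hom p.hom := hs.2.2
  ⟨pushoutInl_injective _ _ hs.1, pushoutDesc_surjective _ hexact.linearMap_comp_eq_zero hs.2.1,
    exact_pushoutInl_pushoutDesc _ hexact⟩

theorem shortExactSeq_ofHom_mkQ_range {A B : Type u} [AddCommGroup A] [Module Λ A]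
    [AddCommGroup B] [Module Λ B] {φ : A →ₗ[Λ] B} (hφ : Function.Injective φ) :
    ShortExactSeq (ModuleCat.ofHom φ) (ModuleCat.ofHom (range φ).mkQ) :=
  ⟨hφ, Submodule.mkQ_surjective _, exact_map_mkQ_range φ⟩

theorem ShortExactSeq.of_comp_iso {A B B' Z : ModuleCat.{u} Λ} {m : A ⟶ B} (φ : B ≅ B')
    {g : B' ⟶ Z} (hs : ShortExactSeq (m ≫ φ.hom) g) : ShortExactSeq m (φ.hom ≫ g) := by
  refine ⟨.of_comp hs.1, hs.2.1.comp (ConcreteCategory.bijective_of_isIso φ.hom).2, fun z ↦ ?_⟩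
  have hφ := (ConcreteCategory.bijective_of_isIso φ.hom).1
  simpa [Set.range_comp, hφ.mem_set_image] using hs.2.2 (φ.hom z)

end ShortExactSeq

section ExactCategory

variable {Λ : Type u} [Ring Λ] (C : Set (ModuleCat.{u} Λ))

open LinearMap

theorem CInjective.exists_extension (hext : ClosedUnderExtensions C) {I : ModuleCat.{u} Λ}
    (hI : CInjective C I) {A B Z : ModuleCat.{u} Λ} {i : A ⟶ B} {p : B ⟶ Z}
    (hs : ShortExactSeq i p) (hZ : Z ∈ C) (a : A ⟶ I) : ∃ b : B ⟶ I, i ≫ b = a := by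
  have hU := hs.pushout a
  obtain ⟨r, hr⟩ := hI.2 _ _ (hext _ _ _ _ _ hI.1 hZ hU) hZ _ _ hU
  refine ⟨-(ModuleCat.ofHom (pushoutInr a.hom i.hom) ≫ r), ?_⟩
  ext x
  simpa [pushoutInl_apply_eq_neg] using ConcreteCategory.congr_hom hr (a x)

theorem biprod_lift_comp_biprodIsoProd_hom {X Y I : ModuleCat.{u} Λ} (f : X ⟶ Y) (e : X ⟶ I) :
    biprod.lift f e ≫ (ModuleCat.biprodIsoProd Y I).hom = ModuleCat.ofHom (f.hom.prod e.hom) := by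
  rw [← Iso.eq_comp_inv]
  apply biprod.hom_ext <;> simp <;> rfl

theorem isInflation_biprod_lift (hsum : ClosedUnderSums C) (hext : ClosedUnderExtensions C)
    {X Y I X₀ : ModuleCat.{u} Λ} (hX : X ∈ C) (hY : Y ∈ C) (hI : I ∈ C) (hX₀ : X₀ ∈ C)
    (f : X ⟶ Y) {e : X ⟶ I} {q : I ⟶ X₀} (hs : ShortExactSeq e q) :
    IsInflation C (biprod.lift f e) := by
  have hm : Function.Injective (f.hom.prod e.hom) := fun x y hxy ↦ hs.1 congr(($hxy).2)
  have hcoker : ShortExactSeq (biprod.lift f e)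
      ((ModuleCat.biprodIsoProd Y I).hom ≫ ModuleCat.ofHom (range (f.hom.prod e.hom)).mkQ) :=
    .of_comp_iso _ <| by
      rw [biprod_lift_comp_biprodIsoProd_hom]
      exact shortExactSeq_ofHom_mkQ_range hm
  exact ⟨hX, hsum Y I hY hI, hcoker.1, _, hext _ _ _ _ _ hY hX₀ (hs.pushout f), _, hcoker⟩

end ExactCategory

theorem smono_contravariantly_finite_in_hmor_general
    (Λ : Type u) [Ring Λ]
    (C : Set (ModuleCat.{u} Λ))
    (hCsum : ClosedUnderSums C) (hCext : ClosedUnderExtensions C)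
    (hCinj : EnoughCInjectives C)
    (X Y : ModuleCat.{u} Λ) (hX : X ∈ C) (hY : Y ∈ C) (f : X ⟶ Y) :
    ∃ (I : ModuleCat.{u} Λ), CInjective C I ∧ ∃ e : X ⟶ I,
      IsInflation C (biprod.lift f e) ∧
      ∀ (X' Y' : ModuleCat.{u} Λ) (h : X' ⟶ Y'), IsInflation C h →
        ∀ (φ₁ : X' ⟶ X) (φ₂ : Y' ⟶ Y), h ≫ φ₂ = φ₁ ≫ f →
          ∃ ψ : Y' ⟶ (Y ⊞ I : ModuleCat.{u} Λ),
            h ≫ ψ = φ₁ ≫ biprod.lift f e ∧ ψ ≫ biprod.fst = φ₂ := by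
  obtain ⟨I, X₀, hI, hX₀, e, q, hs⟩ := hCinj X hX
  refine ⟨I, hI, e, isInflation_biprod_lift C hCsum hCext hX hY hI.1 hX₀ f hs, ?_⟩
  rintro X' Y' h ⟨-, -, -, Z, hZ, p, hp⟩ φ₁ φ₂ hcomm
  obtain ⟨b, hb⟩ := hI.exists_extension C hCext hp hZ (φ₁ ≫ e)
  refine ⟨biprod.lift φ₂ b, ?_, biprod.lift_fst _ _⟩
  apply biprod.hom_ext <;> simp [hcomm, hb]

/-- If `C` has enough `C`-injectives, then `S(C)` is contravariantly finite
in `H(C)`: for `f : X ⟶ Y` with `X, Y ∈ C` there are a `C`-injective `I` and `e : X ⟶ I`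
such that `(f,e)ᵗ : X ⟶ Y ⊞ I` lies in `S(C)` and `(𝟙_X, [1,0]) : (f,e)ᵗ → f` is a right
`S(C)`-approximation. -/
theorem smono_contravariantly_finite_in_hmor
    (k : Type u) [Field k] (Λ : Type u) [Ring Λ] [Algebra k Λ] [FiniteDimensional k Λ]
    (C : Set (ModuleCat.{u} Λ))
    (hCfd : ∀ M ∈ C, Module.Finite Λ M)
    (hC0 : ContainsZero C) (hCiso : ClosedUnderIso C)
    (hCsum : ClosedUnderSums C) (hCext : ClosedUnderExtensions C)
    (hCinj : EnoughCInjectives C)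
    (X Y : ModuleCat.{u} Λ) (hX : X ∈ C) (hY : Y ∈ C) (f : X ⟶ Y) :
    ∃ (I : ModuleCat.{u} Λ), CInjective C I ∧ ∃ e : X ⟶ I,
      IsInflation C (biprod.lift f e) ∧
      ∀ (X' Y' : ModuleCat.{u} Λ) (h : X' ⟶ Y'), IsInflation C h →
        ∀ (φ₁ : X' ⟶ X) (φ₂ : Y' ⟶ Y), h ≫ φ₂ = φ₁ ≫ f →
          ∃ ψ : Y' ⟶ (Y ⊞ I : ModuleCat.{u} Λ),
            h ≫ ψ = φ₁ ≫ biprod.lift f e ∧ ψ ≫ biprod.fst = φ₂ :=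
  smono_contravariantly_finite_in_hmor_general Λ C hCsum hCext hCinj X Y hX hY f
end

section
/- Assume C has enough C-projectives. Then F(C) is covariantly finite in the category H(C) of arrows between objects of C: for every Λ-linear map f : X → Y with X, Y ∈ C, there exist a C-projective object P ∈ C and a deflation p : P → Y of C such that the map (f,p) : X ⊕ P → Y (with components f and p) lies in F(C), and the arrow morphism ((1,0)ᵗ, 𝟙_Y) : f → (f,p) is a left F(C)-approximation of f: for every h : M → N in F(C) and every arrow morphism (α, β) : f → h, there exists γ : X ⊕ P → M with h ∘ γ = β ∘ (f,p) and γ ∘ (1,0)ᵗ = α. -/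
open CategoryTheory CategoryTheory.Limits

universe u

section ShortExactSeq

variable {Λ : Type u} [Ring Λ] {A B N : ModuleCat.{u} Λ}

/-- For `u = -v`, this is the pullback of `h` along `v`. -/
abbrev kerCoprod (u : A ⟶ N) (h : B ⟶ N) : ModuleCat.{u} Λ :=
  ModuleCat.of Λ (LinearMap.ker (u.hom.coprod h.hom))

def kerCoprod.fst (u : A ⟶ N) (h : B ⟶ N) : kerCoprod u h ⟶ A :=
  ModuleCat.ofHom ((LinearMap.fst Λ A B).comp (LinearMap.ker (u.hom.coprod h.hom)).subtype)

def kerCoprod.snd (u : A ⟶ N) (h : B ⟶ N) : kerCoprod u h ⟶ B :=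
  ModuleCat.ofHom ((LinearMap.snd Λ A B).comp (LinearMap.ker (u.hom.coprod h.hom)).subtype)

theorem exists_shortExactSeq_kerCoprod {Z : ModuleCat.{u} Λ} {g : Z ⟶ B} {h : B ⟶ N}
    (hgh : ShortExactSeq g h) (u : A ⟶ N) :
    ∃ i : Z ⟶ kerCoprod u h, ShortExactSeq i (kerCoprod.fst u h) := by
  obtain ⟨hg, hh, hexact⟩ := hgh
  have hmem : ∀ z, (0, g z) ∈ LinearMap.ker (u.hom.coprod h.hom) := fun z => by
    simpa using hexact.apply_apply_eq_zero z
  refine ⟨ModuleCat.ofHom (LinearMap.codRestrict _ ((LinearMap.inr Λ A B).comp g.hom) hmem),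
    fun z z' hzz' => hg (congrArg (fun e => e.1.2) hzz'), fun a => ?_, fun e => ?_⟩
  · obtain ⟨b, hb⟩ := hh (-u a)
    exact ⟨⟨(a, b), by simp [hb]⟩, rfl⟩
  · obtain ⟨⟨a, b⟩, he⟩ := e
    have hab : u a + h b = 0 := he
    constructor
    · rintro (rfl : a = 0)
      obtain ⟨z, rfl⟩ := (hexact b).1 (by simpa using hab)
      exact ⟨z, rfl⟩
    · rintro ⟨z, hz⟩
      exact congrArg (fun e => e.1.1) hz.symm

theorem shortExactSeq_ker_subtype {B N : ModuleCat.{u} Λ} {g : B ⟶ N}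
    (hg : Function.Surjective g) :
    ShortExactSeq (ModuleCat.ofHom (LinearMap.ker g.hom).subtype) g :=
  ⟨Subtype.val_injective, hg, fun b =>
    ⟨fun hb => ⟨⟨b, hb⟩, rfl⟩, by rintro ⟨⟨b, hb⟩, rfl⟩; exact hb⟩⟩

theorem ShortExactSeq.comp_iso_hom {Z B B' N : ModuleCat.{u} Λ} {k : Z ⟶ B} {g : B ⟶ N}
    (hkg : ShortExactSeq k g) (e : B ≅ B') : ShortExactSeq (k ≫ e.hom) (e.inv ≫ g) := by
  obtain ⟨hk, hg, hexact⟩ := hkg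
  refine ⟨e.toLinearEquiv.injective.comp hk, hg.comp e.toLinearEquiv.symm.surjective,
    fun b' => ?_⟩
  have : ∀ z, e.hom (k z) = b' ↔ k z = e.inv b' := fun z => by
    rw [← e.toLinearEquiv.symm.injective.eq_iff]; simp
  simpa [this] using hexact (e.inv b')

theorem ModuleCat.biprodIsoProd_inv_comp_desc {A B N : ModuleCat.{u} Λ} (u : A ⟶ N)
    (h : B ⟶ N) :
    (ModuleCat.biprodIsoProd A B).inv ≫ biprod.desc u h =
      ModuleCat.ofHom (u.hom.coprod h.hom) := by
  rw [biprod.desc_eq, Preadditive.comp_add, ← Category.assoc, ← Category.assoc,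
    ModuleCat.biprodIsoProd_inv_comp_fst, ModuleCat.biprodIsoProd_inv_comp_snd]
  ext <;> simp

end ShortExactSeq

section Deflations

variable {Λ : Type u} [Ring Λ] (C : Set (ModuleCat.{u} Λ))

/-- The kernel of `(f, p)` is an extension of `X` by the kernel of `p`. -/
theorem isDeflation_biprod_desc (hsum : ClosedUnderSums C) (hext : ClosedUnderExtensions C)
    {X P Y : ModuleCat.{u} Λ} (hX : X ∈ C) {p : P ⟶ Y} (hp : IsDeflation C p) (f : X ⟶ Y) :
    IsDeflation C (biprod.desc f p) := by
  obtain ⟨hP, hY, hpsurj, X', hX', q, hqp⟩ := hp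
  obtain ⟨i, hi⟩ := exists_shortExactSeq_kerCoprod hqp f
  have hsurj : Function.Surjective (f.hom.coprod p.hom) := fun y => by
    obtain ⟨r, rfl⟩ := hpsurj y
    exact ⟨(0, r), by simp⟩
  have hses := (shortExactSeq_ker_subtype (g := ModuleCat.ofHom (f.hom.coprod p.hom)) hsurj
    ).comp_iso_hom (ModuleCat.biprodIsoProd X P).symm
  have hdesc : (ModuleCat.biprodIsoProd X P).hom ≫ ModuleCat.ofHom (f.hom.coprod p.hom) =
      biprod.desc f p := by
    rw [← ModuleCat.biprodIsoProd_inv_comp_desc, Iso.hom_inv_id_assoc]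
  rw [Iso.symm_inv, hdesc] at hses
  exact ⟨hsum X P hX hP, hY, hses.2.1, _, hext _ _ _ i _ hX' hX hi, _, hses⟩

/-- The splitting of the pullback of `h` along `u`, which lies in `C` as an extension of `P`
by the kernel of `h`, yields the lift. -/
theorem CProjective.exists_lift (hext : ClosedUnderExtensions C) {P M N : ModuleCat.{u} Λ}
    (hP : CProjective C P) {h : M ⟶ N} (hh : IsDeflation C h) (u : P ⟶ N) :
    ∃ l : P ⟶ M, l ≫ h = u := by
  obtain ⟨-, -, -, Z, hZ, g, hgh⟩ := hh
  obtain ⟨i, hi⟩ := exists_shortExactSeq_kerCoprod hgh (-u)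
  obtain ⟨s, hs⟩ := hP.2 Z _ hZ (hext _ _ _ i _ hZ hP.1 hi) i _ hi
  refine ⟨s ≫ kerCoprod.snd (-u) h, ModuleCat.hom_ext (LinearMap.ext fun r => ?_)⟩
  have hfst : (s r).1.1 = r := ConcreteCategory.congr_hom hs r
  have hker : -u (s r).1.1 + h (s r).1.2 = 0 := (s r).2
  rw [hfst, neg_add_eq_zero] at hker
  exact hker.symm

end Deflations

theorem fepi_covariantly_finite_in_hmor_general
    (Λ : Type u) [Ring Λ]
    (C : Set (ModuleCat.{u} Λ))
    (hCsum : ClosedUnderSums C) (hCext : ClosedUnderExtensions C)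
    (hCproj : EnoughCProjectives C)
    (X Y : ModuleCat.{u} Λ) (hX : X ∈ C) (hY : Y ∈ C) (f : X ⟶ Y) :
    ∃ (P : ModuleCat.{u} Λ), CProjective C P ∧ ∃ p : P ⟶ Y, IsDeflation C p ∧
      IsDeflation C (biprod.desc f p) ∧
      ∀ (M N : ModuleCat.{u} Λ) (h : M ⟶ N), IsDeflation C h →
        ∀ (α : X ⟶ M) (β : Y ⟶ N), f ≫ β = α ≫ h →
          ∃ γ : (X ⊞ P : ModuleCat.{u} Λ) ⟶ M,
            γ ≫ h = biprod.desc f p ≫ β ∧ biprod.inl ≫ γ = α := by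
  obtain ⟨P, X', hP, hX', q, p, hqp⟩ := hCproj Y hY
  have hp : IsDeflation C p := ⟨hP.1, hY, hqp.2.1, X', hX', q, hqp⟩
  refine ⟨P, hP, p, hp, isDeflation_biprod_desc C hCsum hCext hX hp f, ?_⟩
  intro M N h hh α β hcomm
  obtain ⟨l, hl⟩ := hP.exists_lift C hCext hh (p ≫ β)
  refine ⟨biprod.desc α l, ?_, biprod.inl_desc α l⟩
  apply biprod.hom_ext' <;> simp [hcomm, hl]

/-- If `C` has enough `C`-projectives, then `F(C)` is covariantly finite in
`H(C)`: for `f : X ⟶ Y` with `X, Y ∈ C` there are a `C`-projective `P` and a deflation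
`p : P ⟶ Y` such that `(f,p) : X ⊞ P ⟶ Y` lies in `F(C)` and `((1,0)ᵗ, 𝟙_Y) : f → (f,p)` is a
left `F(C)`-approximation. -/
theorem fepi_covariantly_finite_in_hmor
    (k : Type u) [Field k] (Λ : Type u) [Ring Λ] [Algebra k Λ] [FiniteDimensional k Λ]
    (C : Set (ModuleCat.{u} Λ))
    (hCfd : ∀ M ∈ C, Module.Finite Λ M)
    (hC0 : ContainsZero C) (hCiso : ClosedUnderIso C)
    (hCsum : ClosedUnderSums C) (hCext : ClosedUnderExtensions C)
    (hCproj : EnoughCProjectives C)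
    (X Y : ModuleCat.{u} Λ) (hX : X ∈ C) (hY : Y ∈ C) (f : X ⟶ Y) :
    ∃ (P : ModuleCat.{u} Λ), CProjective C P ∧ ∃ p : P ⟶ Y, IsDeflation C p ∧
      IsDeflation C (biprod.desc f p) ∧
      ∀ (M N : ModuleCat.{u} Λ) (h : M ⟶ N), IsDeflation C h →
        ∀ (α : X ⟶ M) (β : Y ⟶ N), f ≫ β = α ≫ h →
          ∃ γ : (X ⊞ P : ModuleCat.{u} Λ) ⟶ M,
            γ ≫ h = biprod.desc f p ≫ β ∧ biprod.inl ≫ γ = α :=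
  fepi_covariantly_finite_in_hmor_general Λ C hCsum hCext hCproj X Y hX hY f
end

section
/- Assume C has enough C-injectives and is contravariantly finite in mod Λ. Then F(C) is contravariantly finite in the epimorphism category F(mod Λ) of all surjective morphisms between finite-dimensional Λ-modules: every surjective Λ-linear map between finite-dimensional Λ-modules admits a right F(C)-approximation in the arrow category of mod Λ. -/
open CategoryTheory CategoryTheory.Limits

universe u

/-!
Take a right `C`-approximation `c : M ⟶ X`, a right `C`-approximation `κ` of `ker (c ≫ f)`
(finitely generated because `Λ` is noetherian), and an inflation `e : N ⟶ I` into a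
`C`-injective. The pushout `B` of `θ := κ ≫ ker.subtype` and `e` is an extension of `M` by
`coker e`, so `M × I ⟶ B` is a deflation of `C` with kernel `N`; it maps to `f` by `c` on `M`
and by zero on `I`. Given a morphism from a deflation `a : U ⟶ V` with kernel `L` to `f`, lift
its left component through `c` to `v : U ⟶ M`. On `L` the map `v` lands in the kernel, so it
factors through `θ` via some `ℓ : L ⟶ N`; by `C`-injectivity `ℓ ≫ e` extends to `T : U ⟶ I`.
Then `(v, T) : U ⟶ M × I` kills `L` modulo `N`, hence descends along `a` to `V ⟶ B`.
-/

section Amalgam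

variable {Λ : Type u} [Ring Λ]

namespace ShortExactSeq

variable {X Y Z : ModuleCat.{u} Λ} {f : X ⟶ Y} {g : Y ⟶ Z}

lemma comp_eq_zero (h : ShortExactSeq f g) : f ≫ g = 0 := by
  ext x
  exact h.2.2.apply_apply_eq_zero x

lemma exists_desc (h : ShortExactSeq f g) {B : ModuleCat.{u} Λ} (φ : Y ⟶ B) (hφ : f ≫ φ = 0) :
    ∃ ψ : Z ⟶ B, g ≫ ψ = φ := by
  have hle : LinearMap.range f.hom ≤ LinearMap.ker φ.hom := by
    rintro _ ⟨x, rfl⟩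
    exact congr(($hφ).hom x)
  refine ⟨ModuleCat.ofHom ((LinearMap.range f.hom).liftQ φ.hom hle ∘ₗ
    (h.2.2.linearEquivOfSurjective (f := f.hom) h.2.1).symm.toLinearMap), ?_⟩
  ext y
  simp

end ShortExactSeq

variable {N M I : ModuleCat.{u} Λ} (θ : N ⟶ M) (e : N ⟶ I)

/-- The pushout of `θ` and `e`, with the sign convention `θ ≫ inl = -(e ≫ inr)`. -/
def amalgam : ModuleCat.{u} Λ :=
  ModuleCat.of Λ ((M × I) ⧸ LinearMap.range (θ.hom.prod e.hom))

namespace amalgam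

def π : ModuleCat.of Λ (M × I) ⟶ amalgam θ e := ModuleCat.ofHom (Submodule.mkQ _)

def inl : M ⟶ amalgam θ e := ModuleCat.ofHom (Submodule.mkQ _ ∘ₗ LinearMap.inl Λ M I)

def inr : I ⟶ amalgam θ e := ModuleCat.ofHom (Submodule.mkQ _ ∘ₗ LinearMap.inr Λ M I)

lemma inl_add_inr : θ ≫ inl θ e + e ≫ inr θ e = 0 := by
  ext n
  exact (Submodule.Quotient.mk_eq_zero _).2 ⟨n, Prod.ext (add_zero _).symm (zero_add _).symm⟩

def desc {Z : ModuleCat.{u} Λ} (a : M ⟶ Z) (b : I ⟶ Z) (h : θ ≫ a + e ≫ b = 0) :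
    amalgam θ e ⟶ Z :=
  ModuleCat.ofHom ((LinearMap.range _).liftQ (a.hom.coprod b.hom) (by
    rintro _ ⟨n, rfl⟩
    exact congr(($h).hom n)))

lemma π_desc {Z : ModuleCat.{u} Λ} (a : M ⟶ Z) (b : I ⟶ Z) (h : θ ≫ a + e ≫ b = 0) :
    π θ e ≫ desc θ e a b h = ModuleCat.ofHom (a.hom.coprod b.hom) := rfl

lemma π_desc_apply {Z : ModuleCat.{u} Λ} (a : M ⟶ Z) (b : I ⟶ Z) (h : θ ≫ a + e ≫ b = 0)
    (x : M × I) : desc θ e a b h (π θ e x) = a x.1 + b x.2 := rfl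

lemma shortExactSeq_prod_π (he : Function.Injective e) :
    ShortExactSeq (ModuleCat.ofHom (θ.hom.prod e.hom)) (π θ e) :=
  ⟨fun _ _ hnm => he congr(Prod.snd $hnm), Submodule.mkQ_surjective _,
    LinearMap.exact_iff.2 (Submodule.ker_mkQ _)⟩

lemma shortExactSeq_inl_desc {N' : ModuleCat.{u} Λ} {q : I ⟶ N'} (hse : ShortExactSeq e q) :
    ShortExactSeq (inl θ e) (desc θ e 0 q (by simp [hse.comp_eq_zero])) := by
  obtain ⟨he, hq, hexact⟩ := hse
  refine ⟨?_, fun n' => ?_, fun y => ⟨fun hy => ?_, ?_⟩⟩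
  · rw [← LinearMap.ker_eq_bot (f := (inl θ e).hom), eq_bot_iff]
    intro m hm
    obtain ⟨n, hn⟩ := (Submodule.Quotient.mk_eq_zero _).1 hm
    obtain rfl : n = 0 := he (by simpa using congr(Prod.snd $hn))
    simpa using congr(Prod.fst $hn).symm
  · obtain ⟨i, rfl⟩ := hq n'
    exact ⟨π θ e (0, i), by rw [π_desc_apply]; simp⟩
  · obtain ⟨⟨m, i⟩, rfl⟩ := Submodule.mkQ_surjective _ y
    have hqi : desc θ e 0 q _ (π θ e (m, i)) = 0 := hy
    rw [π_desc_apply] at hqi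
    obtain ⟨n, rfl⟩ := (hexact i).1 (by simpa using hqi)
    refine ⟨m - θ n, (Submodule.Quotient.eq _).2 ⟨-n, ?_⟩⟩
    simp
  · rintro ⟨m, rfl⟩
    change desc θ e 0 q _ (π θ e (m, 0)) = 0
    rw [π_desc_apply]
    simp

variable {θ e} in
lemma mem_of_shortExactSeq {C : Set (ModuleCat.{u} Λ)} (hCext : ClosedUnderExtensions C)
    (hM : M ∈ C) {N' : ModuleCat.{u} Λ} (hN' : N' ∈ C) {q : I ⟶ N'} (hse : ShortExactSeq e q) :
    amalgam θ e ∈ C :=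
  hCext _ _ _ _ _ hM hN' (shortExactSeq_inl_desc θ e hse)

end amalgam

end Amalgam

section Approximation

variable {Λ : Type u} [Ring Λ] {C : Set (ModuleCat.{u} Λ)}

/-- The pushout of `ι` and `t` is an extension of `V` by `I`, which splits. -/
lemma CInjective.exists_extension_s5 (hCext : ClosedUnderExtensions C) {I L U V : ModuleCat.{u} Λ}
    (hI : CInjective C I) (hV : V ∈ C) {ι : L ⟶ U} {a : U ⟶ V} (hse : ShortExactSeq ι a)
    (t : L ⟶ I) : ∃ T : U ⟶ I, ι ≫ T = t := by
  obtain ⟨r, hr⟩ := hI.2 _ _ (amalgam.mem_of_shortExactSeq hCext hI.1 hV hse) hV _ _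
    (amalgam.shortExactSeq_inl_desc t ι hse)
  refine ⟨-(amalgam.inr t ι ≫ r), ?_⟩
  rw [Preadditive.comp_neg, ← Category.assoc,
    eq_neg_of_add_eq_zero_right (amalgam.inl_add_inr t ι), Preadditive.neg_comp, neg_neg,
    Category.assoc, hr, Category.comp_id]

lemma IsRightApprox.exists_lift_of_comp_eq_zero {X Y N : ModuleCat.{u} Λ} {φ : X ⟶ Y}
    {κ : N ⟶ ModuleCat.of Λ (LinearMap.ker φ.hom)} (hκ : IsRightApprox C κ)
    {L : ModuleCat.{u} Λ} (hL : L ∈ C) (ℓ : L ⟶ X) (hℓ : ℓ ≫ φ = 0) :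
    ∃ ℓ' : L ⟶ N, ℓ' ≫ κ ≫ ModuleCat.ofHom (LinearMap.ker φ.hom).subtype = ℓ := by
  obtain ⟨ℓ', hℓ'⟩ :=
    hκ.2 L hL (ModuleCat.ofHom (LinearMap.codRestrict _ ℓ.hom fun x => congr(($hℓ).hom x)))
  exact ⟨ℓ', by rw [reassoc_of% hℓ']; rfl⟩

namespace amalgam

lemma π_mem_fEpi (hCiso : ClosedUnderIso C) (hCsum : ClosedUnderSums C)
    (hCext : ClosedUnderExtensions C) {N M I N' : ModuleCat.{u} Λ} (hN : N ∈ C) (hM : M ∈ C)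
    (hI : I ∈ C) (hN' : N' ∈ C) (θ : N ⟶ M) {e : N ⟶ I} {q : I ⟶ N'}
    (hse : ShortExactSeq e q) : Arrow.mk (π θ e) ∈ FEpi C :=
  have hMI : ModuleCat.of Λ (M × I) ∈ C :=
    hCiso _ _ (ModuleCat.biprodIsoProd M I) (hCsum M I hM hI)
  ⟨hMI, mem_of_shortExactSeq hCext hM hN' hse, Submodule.mkQ_surjective _,
    N, hN, _, shortExactSeq_prod_π θ e hse.1⟩

variable {N M I X Y : ModuleCat.{u} Λ} (θ : N ⟶ M) (e : N ⟶ I) (c : M ⟶ X) (f : X ⟶ Y)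

def arrowHom (h : θ ≫ c ≫ f = 0) : Arrow.mk (π θ e) ⟶ Arrow.mk f :=
  Arrow.homMk (u := ModuleCat.ofHom (LinearMap.fst Λ M I) ≫ c)
    (v := desc θ e (c ≫ f) 0 (by simpa using h)) (by
      change _ ≫ f = π θ e ≫ _
      rw [π_desc]
      ext <;> simp)

variable {θ e c f}

theorem exists_lift_arrowHom (hCext : ClosedUnderExtensions C) (hc : IsRightApprox C c)
    (h : θ ≫ c ≫ f = 0)
    (hθ : ∀ L ∈ C, ∀ ℓ : L ⟶ M, ℓ ≫ c ≫ f = 0 → ∃ ℓ' : L ⟶ N, ℓ' ≫ θ = ℓ)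
    (hI : CInjective C I) {W : Arrow (ModuleCat.{u} Λ)} (hW : W ∈ FEpi C)
    (u : W ⟶ Arrow.mk f) : ∃ v : W ⟶ Arrow.mk (π θ e), v ≫ arrowHom θ e c f h = u := by
  obtain ⟨hU, hV, ha, L, hL, ι, hse⟩ := hW
  have hu : u.left ≫ f = W.hom ≫ u.right := Arrow.w u
  obtain ⟨v, hv⟩ := hc.2 W.left hU u.left
  obtain ⟨ℓ, hℓ⟩ := hθ L hL (ι ≫ v) (by
    rw [Category.assoc, reassoc_of% hv, hu, reassoc_of% hse.comp_eq_zero, zero_comp])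
  obtain ⟨T, hT⟩ := hI.exists_extension_s5 hCext hV hse (ℓ ≫ e)
  let ψ : W.left ⟶ ModuleCat.of Λ (M × I) := ModuleCat.ofHom (v.hom.prod T.hom)
  have hψ : ι ≫ ψ ≫ π θ e = 0 := by
    ext l
    exact (Submodule.Quotient.mk_eq_zero _).2
      ⟨ℓ l, Prod.ext congr(($hℓ).hom l) congr(($hT).hom l).symm⟩
  obtain ⟨ψ', hψ'⟩ := hse.exists_desc (ψ ≫ π θ e) hψ
  refine ⟨Arrow.homMk (u := ψ) (v := ψ') hψ'.symm, Arrow.hom_ext _ _ ?_ ?_⟩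
  · ext x
    exact congr(($hv).hom x)
  · have : Epi W.hom := (ModuleCat.epi_iff_surjective _).2 ha
    simp only [arrowHom, Arrow.comp_right, Arrow.homMk_right]
    rw [← cancel_epi W.hom, reassoc_of% hψ', π_desc, ← hu, ← hv]
    ext
    simp [ψ]

end amalgam

end Approximation

theorem fepi_contravariantly_finite_general
    (k : Type u) [Field k] (Λ : Type u) [Ring Λ] [Algebra k Λ] [FiniteDimensional k Λ]
    (C : Set (ModuleCat.{u} Λ))
    (hCfd : ∀ M ∈ C, Module.Finite Λ M)
    (hCiso : ClosedUnderIso C)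
    (hCsum : ClosedUnderSums C) (hCext : ClosedUnderExtensions C)
    (hCinj : EnoughCInjectives C) (hCcontra : ContravariantlyFinite C) :
    ∀ (X Y : ModuleCat.{u} Λ), Module.Finite Λ X → Module.Finite Λ Y →
      ∀ f : X ⟶ Y, Function.Surjective f →
        ∃ (b : Arrow (ModuleCat.{u} Λ)) (g : b ⟶ Arrow.mk f), IsRightApprox (FEpi C) g := by
  intro X Y hX _ f _
  have : IsNoetherianRing Λ := isNoetherian_of_tower k inferInstance
  obtain ⟨M, c, hc⟩ := hCcontra X hX
  have : Module.Finite Λ M := hCfd M hc.1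
  obtain ⟨N, κ, hκ⟩ := hCcontra (ModuleCat.of Λ (LinearMap.ker (c ≫ f).hom)) inferInstance
  obtain ⟨I, N', hI, hN', e, q, hse⟩ := hCinj N hκ.1
  let θ := κ ≫ ModuleCat.ofHom (LinearMap.ker (c ≫ f).hom).subtype
  have hθ : θ ≫ c ≫ f = 0 := by
    ext n
    exact (κ n).2
  exact ⟨_, amalgam.arrowHom θ e c f hθ,
    amalgam.π_mem_fEpi hCiso hCsum hCext hκ.1 hc.1 hI.1 hN' θ hse,
    fun W hW u => amalgam.exists_lift_arrowHom hCext hc hθ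
      (fun L hL ℓ hℓ => hκ.exists_lift_of_comp_eq_zero hL ℓ hℓ) hI hW u⟩

/-- If `C` has enough `C`-injectives and is contravariantly finite in `mod Λ`,
then `F(C)` is contravariantly finite in `F(mod Λ)`: every surjective map between
finite-dimensional Λ-modules admits a right `F(C)`-approximation in the arrow category. -/
theorem fepi_contravariantly_finite
    (k : Type u) [Field k] (Λ : Type u) [Ring Λ] [Algebra k Λ] [FiniteDimensional k Λ]
    (C : Set (ModuleCat.{u} Λ))
    (hCfd : ∀ M ∈ C, Module.Finite Λ M)
    (hC0 : ContainsZero C) (hCiso : ClosedUnderIso C)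
    (hCsum : ClosedUnderSums C) (hCext : ClosedUnderExtensions C)
    (hCinj : EnoughCInjectives C) (hCcontra : ContravariantlyFinite C) :
    ∀ (X Y : ModuleCat.{u} Λ), Module.Finite Λ X → Module.Finite Λ Y →
      ∀ f : X ⟶ Y, Function.Surjective f →
        ∃ (b : Arrow (ModuleCat.{u} Λ)) (g : b ⟶ Arrow.mk f), IsRightApprox (FEpi C) g :=
  fepi_contravariantly_finite_general k Λ C hCfd hCiso hCsum hCext hCinj hCcontra
end

section
/- With notation as in the context, the cw-exact sequences δ(a,c,b) and δ(a,c′,b) are isomorphic if and only if there exist an automorphism (α₁, α₂) of the arrow a (isomorphisms α₁ of A₁ and α₂ of A₂ with α₂ ∘ a = a ∘ α₁) and an automorphism (β₁, β₂) of the arrow b (isomorphisms with β₂ ∘ b = b ∘ β₁) such that α₂ ∘ c − c′ ∘ β₁ lies in Htp(a,b), i.e., α₂ ∘ c − c′ ∘ β₁ = a ∘ s + t ∘ b for some s : B₁ → A₁ and t : B₂ → A₂. -/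
open CategoryTheory CategoryTheory.Limits

universe v u

variable {A : Type u} [Category.{v} A] [Preadditive A] [HasBinaryBiproducts A]

/-- The morphism `A₁ ⊞ B₁ ⟶ A₂ ⊞ B₂` with matrix entries `a, c, 0, b`. -/
noncomputable def matMor {A₁ A₂ B₁ B₂ : A} (a : A₁ ⟶ A₂) (c : B₁ ⟶ A₂) (b : B₁ ⟶ B₂) :
    (A₁ ⊞ B₁ : A) ⟶ (A₂ ⊞ B₂ : A) :=
  biprod.desc (a ≫ biprod.inl) (c ≫ biprod.inl + b ≫ biprod.inr)

/-- The inclusion arrow morphism `(inl, inl) : a → M(a,c,b)` of the cw-exact sequence. -/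
noncomputable def incMor {A₁ A₂ B₁ B₂ : A} (a : A₁ ⟶ A₂) (c : B₁ ⟶ A₂) (b : B₁ ⟶ B₂) :
    Arrow.mk a ⟶ Arrow.mk (matMor a c b) :=
  Arrow.homMk (u := biprod.inl) (v := biprod.inl) (by simp [matMor])

/-- The projection arrow morphism `(pr₂, pr₂) : M(a,c,b) → b` of the cw-exact sequence. -/
noncomputable def prjMor {A₁ A₂ B₁ B₂ : A} (a : A₁ ⟶ A₂) (c : B₁ ⟶ A₂) (b : B₁ ⟶ B₂) :
    Arrow.mk (matMor a c b) ⟶ Arrow.mk b :=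
  Arrow.homMk (u := biprod.snd) (v := biprod.snd)
    (by apply biprod.hom_ext' <;> simp [matMor])

/-- `Htp(a,b)`: the morphisms `B₁ ⟶ A₂` of the form `a ∘ s + t ∘ b`. -/
def Htp {A₁ A₂ B₁ B₂ : A} (a : A₁ ⟶ A₂) (b : B₁ ⟶ B₂) (x : B₁ ⟶ A₂) : Prop :=
  ∃ (s : B₁ ⟶ A₁) (t : B₂ ⟶ A₂), x = s ≫ a + b ≫ t

/-- An isomorphism of cw-exact sequences `δ(a,c,b) ≅ δ(a,c′,b)`. -/
noncomputable def SeqIso {A₁ A₂ B₁ B₂ : A} (a : A₁ ⟶ A₂) (c c' : B₁ ⟶ A₂) (b : B₁ ⟶ B₂) :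
    Prop :=
  ∃ (α : Arrow.mk a ≅ Arrow.mk a) (φ : Arrow.mk (matMor a c b) ≅ Arrow.mk (matMor a c' b))
    (β : Arrow.mk b ≅ Arrow.mk b),
    incMor a c b ≫ φ.hom = α.hom ≫ incMor a c' b ∧
    prjMor a c b ≫ β.hom = φ.hom ≫ prjMor a c' b

/-!
A morphism `φ : M(a,c,b) → M(a,c′,b)` compatible with `(α₁, α₂)` on `a` and `(β₁, β₂)` on `b`
has components `φᵢ = M(αᵢ, sᵢ, βᵢ)`, and its commutativity with the two matrices, read off in
the entry `B₁ → A₂`, says exactly `α₂ ∘ c − c′ ∘ β₁ = a ∘ s₁ − s₂ ∘ b`. Conversely, every such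
pair `(s₁, s₂)` defines an isomorphism, since a triangular matrix with invertible diagonal
entries is invertible.
-/

section MatMor

variable {X₁ X₂ X₃ Y₁ Y₂ Y₃ : A}

@[simp]
lemma inl_matMor (a : X₁ ⟶ X₂) (c : Y₁ ⟶ X₂) (b : Y₁ ⟶ Y₂) :
    biprod.inl ≫ matMor a c b = a ≫ biprod.inl := by
  simp [matMor]

@[simp]
lemma inr_matMor (a : X₁ ⟶ X₂) (c : Y₁ ⟶ X₂) (b : Y₁ ⟶ Y₂) :
    biprod.inr ≫ matMor a c b = c ≫ biprod.inl + b ≫ biprod.inr := by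
  simp [matMor]

lemma matMor_fst (a : X₁ ⟶ X₂) (c : Y₁ ⟶ X₂) (b : Y₁ ⟶ Y₂) :
    matMor a c b ≫ biprod.fst = biprod.fst ≫ a + biprod.snd ≫ c := by
  apply biprod.hom_ext' <;> simp [matMor]

@[simp]
lemma matMor_snd (a : X₁ ⟶ X₂) (c : Y₁ ⟶ X₂) (b : Y₁ ⟶ Y₂) :
    matMor a c b ≫ biprod.snd = biprod.snd ≫ b := by
  apply biprod.hom_ext' <;> simp [matMor]

lemma matMor_id : matMor (𝟙 X₁) 0 (𝟙 Y₁) = 𝟙 (X₁ ⊞ Y₁) := by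
  apply biprod.hom_ext' <;> simp [matMor]

lemma matMor_comp (a : X₁ ⟶ X₂) (c : Y₁ ⟶ X₂) (b : Y₁ ⟶ Y₂)
    (a' : X₂ ⟶ X₃) (c' : Y₂ ⟶ X₃) (b' : Y₂ ⟶ Y₃) :
    matMor a c b ≫ matMor a' c' b' = matMor (a ≫ a') (c ≫ a' + b ≫ c') (b ≫ b') := by
  apply biprod.hom_ext' <;> simp [matMor, add_assoc]

noncomputable def matMorIso (p : X₁ ≅ X₂) (r : Y₁ ⟶ X₂) (q : Y₁ ≅ Y₂) :
    (X₁ ⊞ Y₁ : A) ≅ (X₂ ⊞ Y₂ : A) where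
  hom := matMor p.hom r q.hom
  inv := matMor p.inv (-(q.inv ≫ r ≫ p.inv)) q.inv
  hom_inv_id := by simp [matMor_comp, matMor_id]
  inv_hom_id := by simp [matMor_comp, matMor_id]

end MatMor

variable {A₁ A₂ B₁ B₂ A₁' A₂' B₁' B₂' : A}

lemma htp_of_arrowHom_matMor {a : A₁ ⟶ A₂} {c : B₁ ⟶ A₂} {b : B₁ ⟶ B₂}
    {a' : A₁' ⟶ A₂'} {c' : B₁' ⟶ A₂'} {b' : B₁' ⟶ B₂'}
    (φ : Arrow.mk (matMor a c b) ⟶ Arrow.mk (matMor a' c' b')) {α₂ : A₂ ⟶ A₂'} {β₁ : B₁ ⟶ B₁'}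
    (hα : biprod.inl ≫ φ.right = α₂ ≫ biprod.inl) (hβ : φ.left ≫ biprod.snd = biprod.snd ≫ β₁) :
    Htp a' b (c ≫ α₂ - β₁ ≫ c') := by
  refine ⟨biprod.inr ≫ φ.left ≫ biprod.fst, -(biprod.inr ≫ φ.right ≫ biprod.fst), ?_⟩
  have hw := congrArg (biprod.inr ≫ · ≫ biprod.fst) φ.w
  simp only [Arrow.mk_hom, Category.assoc, matMor_fst, Preadditive.comp_add, reassoc_of% hβ,
    reassoc_of% inr_matMor, Preadditive.add_comp, reassoc_of% hα] at hw
  simp only [biprod.inl_fst, biprod.inr_snd_assoc, Category.comp_id, Preadditive.comp_neg,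
    Category.assoc] at hw ⊢
  linear_combination (norm := abel) -hw

lemma matMor_comp_matMor_of_htp {a : A₁ ⟶ A₂} {c : B₁ ⟶ A₂} {b : B₁ ⟶ B₂}
    {a' : A₁' ⟶ A₂'} {c' : B₁' ⟶ A₂'} {b' : B₁' ⟶ B₂'} {α₁ : A₁ ⟶ A₁'} {α₂ : A₂ ⟶ A₂'}
    {β₁ : B₁ ⟶ B₁'} {β₂ : B₂ ⟶ B₂'} (hα : α₁ ≫ a' = a ≫ α₂) (hβ : β₁ ≫ b' = b ≫ β₂)
    {s : B₁ ⟶ A₁'} {t : B₂ ⟶ A₂'} (hst : c ≫ α₂ - β₁ ≫ c' = s ≫ a' + b ≫ t) :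
    matMor α₁ s β₁ ≫ matMor a' c' b' = matMor a c b ≫ matMor α₂ (-t) β₂ := by
  have hc : s ≫ a' + β₁ ≫ c' = c ≫ α₂ + b ≫ (-t) := by
    rw [Preadditive.comp_neg]
    linear_combination (norm := abel) -hst
  rw [matMor_comp, matMor_comp, hα, hβ, hc]

/-- The cw-exact sequences `δ(a,c,b)` and `δ(a,c′,b)` are isomorphic iff
there are automorphisms `(α₁, α₂)` of the arrow `a` and `(β₁, β₂)` of the arrow `b` with
`α₂ ∘ c − c′ ∘ β₁ ∈ Htp(a,b)`. -/
theorem seqIso_iff_htp {A : Type u} [Category.{v} A] [Preadditive A] [HasBinaryBiproducts A]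
    {A₁ A₂ B₁ B₂ : A} (a : A₁ ⟶ A₂) (c c' : B₁ ⟶ A₂) (b : B₁ ⟶ B₂) :
    SeqIso a c c' b ↔
      ∃ (α₁ : A₁ ≅ A₁) (α₂ : A₂ ≅ A₂) (β₁ : B₁ ≅ B₁) (β₂ : B₂ ≅ B₂),
        a ≫ α₂.hom = α₁.hom ≫ a ∧ b ≫ β₂.hom = β₁.hom ≫ b ∧
        Htp a b (c ≫ α₂.hom - β₁.hom ≫ c') := by
  constructor
  · rintro ⟨α, φ, β, hinc, hprj⟩
    have hα : biprod.inl ≫ φ.hom.right = α.hom.right ≫ biprod.inl :=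
      congrArg Arrow.Hom.right hinc
    have hβ : φ.hom.left ≫ biprod.snd = biprod.snd ≫ β.hom.left :=
      (congrArg Arrow.Hom.left hprj).symm
    exact ⟨Arrow.leftFunc.mapIso α, Arrow.rightFunc.mapIso α, Arrow.leftFunc.mapIso β,
      Arrow.rightFunc.mapIso β, α.hom.w.symm, β.hom.w.symm,
      htp_of_arrowHom_matMor φ.hom hα hβ⟩
  · rintro ⟨α₁, α₂, β₁, β₂, hα, hβ, s, t, hst⟩
    refine ⟨Arrow.isoMk' a a α₁ α₂ hα.symm,
      Arrow.isoMk' _ _ (matMorIso α₁ s β₁) (matMorIso α₂ (-t) β₂)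
        (matMor_comp_matMor_of_htp hα.symm hβ.symm hst),
      Arrow.isoMk' b b β₁ β₂ hβ.symm, ?_, ?_⟩
    · ext : 1 <;> simp [incMor, matMorIso]
    · ext : 1 <;> simp [prjMor, matMorIso]
end

section
/- With notation as in the context, if c − c′ ∈ Htp(a,b), i.e., c − c′ = a ∘ s + t ∘ b for some s : B₁ → A₁ and t : B₂ → A₂, then the cw-exact sequences δ(a,c,b) and δ(a,c′,b) are isomorphic. -/
open CategoryTheory CategoryTheory.Limits

universe v u

variable {A : Type u} [Category.{v} A] [Preadditive A] [HasBinaryBiproducts A]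

/-- A "shear" automorphism of a biproduct given by an off-diagonal entry. -/
@[simps]
noncomputable def shearIso {X Y : A} (f : Y ⟶ X) : (X ⊞ Y : A) ≅ (X ⊞ Y : A) where
  hom := biprod.desc biprod.inl (f ≫ biprod.inl + biprod.inr)
  inv := biprod.desc biprod.inl ((-f) ≫ biprod.inl + biprod.inr)
  hom_inv_id := by apply biprod.hom_ext' <;> simp
  inv_hom_id := by apply biprod.hom_ext' <;> simp

/-- **Statement 10.** If `c − c′ ∈ Htp(a,b)` then the cw-exact sequences `δ(a,c,b)` and
`δ(a,c′,b)` are isomorphic. -/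
theorem seqIso_of_htp {A : Type u} [Category.{v} A] [Preadditive A] [HasBinaryBiproducts A]
    {A₁ A₂ B₁ B₂ : A} (a : A₁ ⟶ A₂) (c c' : B₁ ⟶ A₂) (b : B₁ ⟶ B₂)
    (h : Htp a b (c - c')) : SeqIso a c c' b := by
  obtain ⟨s, t, ht⟩ := h
  have hc : c = c' + s ≫ a + b ≫ t := by
    rw [← sub_eq_iff_eq_add'] at ht; linear_combination (norm := abel) ht
  refine ⟨Iso.refl _, Arrow.isoMk (shearIso s) (shearIso (-t)) ?_, Iso.refl _, ?_, ?_⟩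
  · apply biprod.hom_ext' <;>
      simp [matMor, hc, Preadditive.comp_add, Preadditive.add_comp] <;> abel
  · ext <;> simp [incMor]
  · ext <;> simp [prjMor] <;> apply biprod.hom_ext' <;> simp
end

section
/- Let f : X → Y be a morphism in A, let I and I′ be injective objects, and let e : X → I and e′ : X → I′ be morphisms such that both (f,e)ᵗ : X → Y ⊕ I and (f,e′)ᵗ : X → Y ⊕ I′ (the morphisms with the indicated components) are monomorphisms. Then the objects (f,e)ᵗ ⊕ (0 → I′) and (f,e′)ᵗ ⊕ (0 → I) of the morphism category H(A) are isomorphic, where (0 → I) denotes the zero morphism from the zero object to I and ⊕ is the componentwise biproduct in H(A). -/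
open CategoryTheory CategoryTheory.Limits ZeroObject

universe v u

/-- The componentwise biproduct of two objects of the morphism category. -/
noncomputable def arrowDirectSum {A : Type u} [Category.{v} A] [Preadditive A]
    [HasBinaryBiproducts A] (x y : Arrow A) : Arrow A :=
  Arrow.mk (biprod.map x.hom y.hom)

private lemma my_comp_lift {A : Type u} [Category.{v} A] [Preadditive A]
    [HasBinaryBiproducts A] {W P Q1 Q2 : A} (f : W ⟶ P) (g : P ⟶ Q1) (h : P ⟶ Q2) :
    f ≫ biprod.lift g h = biprod.lift (f ≫ g) (f ≫ h) := by
  apply biprod.hom_ext <;> simp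

private lemma my_comp_lift_assoc {A : Type u} [Category.{v} A] [Preadditive A]
    [HasBinaryBiproducts A] {W P Q1 Q2 R : A} (f : W ⟶ P) (g : P ⟶ Q1) (h : P ⟶ Q2)
    (k : Q1 ⊞ Q2 ⟶ R) :
    f ≫ biprod.lift g h ≫ k = biprod.lift (f ≫ g) (f ≫ h) ≫ k := by
  rw [← Category.assoc, my_comp_lift]

private lemma my_lift_fst_snd {A : Type u} [Category.{v} A] [Preadditive A]
    [HasBinaryBiproducts A] {W P Q : A} (f : W ⟶ P ⊞ Q) :
    biprod.lift (f ≫ biprod.fst) (f ≫ biprod.snd) = f := by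
  apply biprod.hom_ext <;> simp

/-- **Statement 12.** If `(f,e)ᵗ : X ⟶ Y ⊞ I` and `(f,e′)ᵗ : X ⟶ Y ⊞ I′` are monomorphisms
with `I`, `I′` injective, then `(f,e)ᵗ ⊕ (0 → I′) ≅ (f,e′)ᵗ ⊕ (0 → I)` in the morphism
category. -/
theorem mimo_unique_up_to_injectives {A : Type u} [Category.{v} A] [Preadditive A]
    [HasBinaryBiproducts A] [HasZeroObject A]
    {X Y I I' : A} (hI : Injective I) (hI' : Injective I')
    (f : X ⟶ Y) (e : X ⟶ I) (e' : X ⟶ I')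
    (h1 : Mono (biprod.lift f e)) (h2 : Mono (biprod.lift f e')) :
    Nonempty
      (arrowDirectSum (Arrow.mk (biprod.lift f e)) (Arrow.mk (0 : (0 : A) ⟶ I')) ≅
       arrowDirectSum (Arrow.mk (biprod.lift f e')) (Arrow.mk (0 : (0 : A) ⟶ I))) := by
  haveI := hI
  haveI := hI'
  obtain ⟨u, hu⟩ : ∃ u : Y ⊞ I ⟶ I', biprod.lift f e ≫ u = e' :=
    ⟨Injective.factorThru e' (biprod.lift f e), Injective.comp_factorThru _ _⟩
  obtain ⟨v, hv⟩ : ∃ v : Y ⊞ I' ⟶ I, biprod.lift f e' ≫ v = e :=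
    ⟨Injective.factorThru e (biprod.lift f e'), Injective.comp_factorThru _ _⟩
  set U : (Y ⊞ I) ⊞ I' ⟶ I' := biprod.fst ≫ u + biprod.snd with hU
  set homYI' : (Y ⊞ I) ⊞ I' ⟶ Y ⊞ I' :=
    biprod.lift (biprod.fst ≫ biprod.fst) U with hhomYI'
  set homm : (Y ⊞ I) ⊞ I' ⟶ (Y ⊞ I') ⊞ I :=
    biprod.lift homYI' (homYI' ≫ v - biprod.fst ≫ biprod.snd) with hhomm
  set V : (Y ⊞ I') ⊞ I ⟶ I := biprod.fst ≫ v - biprod.snd with hV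
  set invYI : (Y ⊞ I') ⊞ I ⟶ Y ⊞ I :=
    biprod.lift (biprod.fst ≫ biprod.fst) V with hinvYI
  set invv : (Y ⊞ I') ⊞ I ⟶ (Y ⊞ I) ⊞ I' :=
    biprod.lift invYI (biprod.fst ≫ biprod.snd - invYI ≫ u) with hinvv
  have hom_inv : homm ≫ invv = 𝟙 _ := by
    apply biprod.hom_ext <;>
      simp [hhomm, hinvv, hinvYI, hhomYI', hU, hV, my_comp_lift, my_comp_lift_assoc, my_lift_fst_snd,
        Preadditive.comp_sub, Preadditive.sub_comp, Preadditive.comp_add,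
        Preadditive.add_comp, sub_sub_cancel, sub_sub_eq_add_sub]
  have inv_hom : invv ≫ homm = 𝟙 _ := by
    apply biprod.hom_ext <;>
      simp [hhomm, hinvv, hinvYI, hhomYI', hU, hV, my_comp_lift, my_comp_lift_assoc, my_lift_fst_snd,
        Preadditive.comp_sub, Preadditive.sub_comp, Preadditive.comp_add,
        Preadditive.add_comp, sub_sub_cancel, sub_sub_eq_add_sub]
  refine ⟨Arrow.isoMk (Iso.refl _) ⟨homm, invv, hom_inv, inv_hom⟩ ?_⟩
  show 𝟙 _ ≫ biprod.map (biprod.lift f e') (0 : (0:A) ⟶ I) =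
    biprod.map (biprod.lift f e) (0 : (0:A) ⟶ I') ≫ homm
  apply biprod.hom_ext'
  · simp only [Category.id_comp, biprod.inl_map_assoc, biprod.inl_map]
    rw [hhomm, my_comp_lift, my_comp_lift]
    simp [hhomYI', hU, my_comp_lift, my_comp_lift_assoc, my_lift_fst_snd, Preadditive.comp_sub, Preadditive.comp_add, hu, hv]
    apply biprod.hom_ext <;> simp
  · apply (isZero_zero A).eq_of_src
end

section
/- Let f : A → B and g : C → D be Λ-linear maps between finite-dimensional Λ-modules, where B has no nonzero injective direct summand. Suppose a : A → C and b : B → D are isomorphisms such that b ∘ f − g ∘ a factors through an injective Λ-module. Let I be an injective Λ-module and e : A → I a map such that (f,e)ᵗ : A → B ⊕ I (the map with components f and e) is injective. Then the arrows (f,e)ᵗ : A → B ⊕ I and (g, e ∘ a⁻¹)ᵗ : C → D ⊕ I are isomorphic objects of the arrow category of mod Λ. -/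
open CategoryTheory CategoryTheory.Limits

universe u

section Defs
variable {Λ : Type u} [Ring Λ]

/-- `I` is an injective Λ-module (an injective object of `mod Λ`): every short exact
sequence of finite-dimensional modules starting at `I` splits. -/
def InjectiveMod (I : ModuleCat.{u} Λ) : Prop :=
  ∀ (U V : ModuleCat.{u} Λ), Module.Finite Λ U → Module.Finite Λ V →
    ∀ (f : I ⟶ U) (g : U ⟶ V), ShortExactSeq f g → ∃ r : U ⟶ I, f ≫ r = 𝟙 I

/-- `B` has no nonzero injective direct summand. -/
def NoInjectiveSummand (B : ModuleCat.{u} Λ) : Prop :=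
  ∀ (N : ModuleCat.{u} Λ) (i : N ⟶ B) (r : B ⟶ N),
    i ≫ r = 𝟙 N → InjectiveMod N → Subsingleton N

end Defs

/-!
Extend `t` along the monomorphism `(f, e)ᵗ` to `τ : B ⊕ I → Q`, and put
`h := b ∘ π_B − s ∘ τ : B ⊕ I → D`. Then `h ∘ (f, e)ᵗ = b f − s t = g a`, so `(a, (h, π_I)ᵗ)` is a
morphism of arrows, and `(h, π_I)ᵗ` is lower triangular with diagonal entries `h ∘ ι_B` and `1`.
Now `h ∘ ι_B = b (1 − b⁻¹ s τ ι_B)`, and an endomorphism of `B` factoring through an injective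
module is nilpotent by Fitting's lemma: the stable image of its powers is a direct summand of `B`
and also a direct summand of the injective module, hence an injective summand of `B`, hence `0`.
-/

namespace InjectiveMod

variable {Λ : Type u} [Ring Λ] {Q : ModuleCat.{u} Λ}

theorem exists_leftInverse (hQ : InjectiveMod Q) {U : Type u} [AddCommGroup U] [Module Λ U]
    [Module.Finite Λ U] (i : Q →ₗ[Λ] U) (hi : Function.Injective i) :
    ∃ r : U →ₗ[Λ] Q, r ∘ₗ i = LinearMap.id := by
  obtain ⟨r, hr⟩ := hQ (.of Λ U) (.of Λ (U ⧸ LinearMap.range i)) inferInstance inferInstance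
    (ModuleCat.ofHom i) (ModuleCat.ofHom (LinearMap.range i).mkQ)
    ⟨hi, Submodule.mkQ_surjective _, i.exact_map_mkQ_range⟩
  exact ⟨r.hom, congrArg ModuleCat.Hom.hom hr⟩

/-- Extension along `j` through the pushout `(E × Q) ⧸ {(j x, -t x)}`, in which `Q` embeds. -/
theorem exists_extension [Module.Finite Λ Q] (hQ : InjectiveMod Q) {A E : ModuleCat.{u} Λ}
    [Module.Finite Λ E] (j : A ⟶ E) (hj : Function.Injective j) (t : A ⟶ Q) :
    ∃ τ : E ⟶ Q, j ≫ τ = t := by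
  let K := LinearMap.range (j.hom.prod (-t.hom))
  have hK (x : A) : K.mkQ (j x, 0) = K.mkQ (0, t x) :=
    (Submodule.Quotient.eq K).mpr ⟨x, by simp⟩
  have hinr : Function.Injective (K.mkQ ∘ₗ LinearMap.inr Λ E Q) := by
    refine (injective_iff_map_eq_zero _).mpr fun y hy => ?_
    obtain ⟨x, hx⟩ : ((0 : E), y) ∈ K := (Submodule.Quotient.mk_eq_zero K).mp hy
    obtain ⟨hjx, htx⟩ := Prod.ext_iff.mp hx
    have hx0 : x = 0 := hj (by simpa using hjx)
    simpa [hx0] using htx.symm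
  obtain ⟨r, hr⟩ := hQ.exists_leftInverse _ hinr
  refine ⟨ModuleCat.ofHom (r ∘ₗ K.mkQ ∘ₗ LinearMap.inl Λ E Q), ModuleCat.hom_ext ?_⟩
  ext x
  simpa [hK] using LinearMap.congr_fun hr (t x)

theorem of_retract [Module.Finite Λ Q] (hQ : InjectiveMod Q) {N : ModuleCat.{u} Λ}
    (i : N ⟶ Q) (r : Q ⟶ N) (hir : i ≫ r = 𝟙 N) : InjectiveMod N := by
  intro U V _ _ f g hfg
  obtain ⟨σ, hσ⟩ := hQ.exists_extension f hfg.1 i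
  exact ⟨σ ≫ r, by rw [← Category.assoc, hσ, hir]⟩

end InjectiveMod

namespace Module.End

open LinearMap

variable {R M : Type*} [Ring R] [AddCommGroup M] [Module R M] (φ : Module.End R M)

theorem pow_mem_range_pow (m n : ℕ) : ∀ x ∈ range (φ ^ n), (φ ^ m) x ∈ range (φ ^ n) := by
  rintro _ ⟨y, rfl⟩
  exact ⟨(φ ^ m) y, by rw [← mul_apply, ← mul_apply, pow_mul_comm]⟩

theorem bijective_restrict_range_pow [IsNoetherian R M] {n : ℕ}
    (hstable : ∀ m, n ≤ m → range (φ ^ n) = range (φ ^ m)) (m : ℕ) :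
    Function.Bijective ((φ ^ m).restrict (φ.pow_mem_range_pow m n)) := by
  have hsurj : Function.Surjective ((φ ^ m).restrict (φ.pow_mem_range_pow m n)) := by
    rintro ⟨y, hy⟩
    rw [hstable (m + n) (Nat.le_add_left n m)] at hy
    obtain ⟨x, rfl⟩ := hy
    exact ⟨⟨(φ ^ n) x, mem_range_self _ x⟩, Subtype.ext (by simp [pow_add])⟩
  exact ⟨IsNoetherian.injective_of_surjective_endomorphism _ hsurj, hsurj⟩

end Module.End

section FactorsThroughInjective

variable {Λ : Type u} [Ring Λ] [IsArtinianRing Λ] {B Q : ModuleCat.{u} Λ}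
  [Module.Finite Λ B] [Module.Finite Λ Q]

theorem isNilpotent_comp_of_noInjectiveSummand (hB : NoInjectiveSummand B)
    (hQ : InjectiveMod Q) (u : B ⟶ Q) (v : Q ⟶ B) : IsNilpotent (End.of (u ≫ v)) := by
  set φ : Module.End Λ B := v.hom ∘ₗ u.hom
  obtain ⟨n, hn⟩ := IsArtinian.monotone_stabilizes φ.iterateRange
  have hstable (m : ℕ) (hm : n ≤ m) : LinearMap.range (φ ^ n) = LinearMap.range (φ ^ m) :=
    congrArg OrderDual.ofDual (hn m hm)
  let C := LinearMap.range (φ ^ n)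
  have retraction {X : ModuleCat.{u} Λ} (s : .of Λ C ⟶ X) (p : X ⟶ .of Λ C)
      (hsp : Function.Bijective (s ≫ p)) : ∃ r : X ⟶ .of Λ C, s ≫ r = 𝟙 _ := by
    have := (ConcreteCategory.isIso_iff_bijective _).mpr hsp
    exact ⟨p ≫ inv (s ≫ p), by rw [← Category.assoc, IsIso.hom_inv_id]⟩
  obtain ⟨rB, hrB⟩ := retraction (ModuleCat.ofHom C.subtype)
    (ModuleCat.ofHom ((φ ^ n).codRestrict C (LinearMap.mem_range_self _)))
    (φ.bijective_restrict_range_pow hstable n)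
  obtain ⟨rQ, hrQ⟩ := retraction (ModuleCat.ofHom (u.hom ∘ₗ C.subtype))
    (ModuleCat.ofHom (((φ ^ n) ∘ₗ v.hom).codRestrict C fun y => LinearMap.mem_range_self _ (v y)))
    (by
      convert φ.bijective_restrict_range_pow hstable (n + 1) using 1
      ext x
      change (φ ^ n) (v.hom (u.hom x)) = (φ ^ (n + 1)) x
      rw [pow_succ, Module.End.mul_apply]
      rfl)
  have : Subsingleton C := hB _ _ rB hrB (hQ.of_retract _ rQ hrQ)
  refine ⟨n, (ModuleCat.endRingEquiv B).injective ?_⟩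
  rw [map_pow, map_zero]
  ext x
  simpa using congrArg Subtype.val (Subsingleton.elim (⟨(φ ^ n) x, ⟨x, rfl⟩⟩ : C) 0)

theorem isIso_one_sub_comp_of_noInjectiveSummand (hB : NoInjectiveSummand B)
    (hQ : InjectiveMod Q) (u : B ⟶ Q) (v : Q ⟶ B) : IsIso (𝟙 B - u ≫ v) :=
  (isUnit_iff_isIso _).mp (isNilpotent_comp_of_noInjectiveSummand hB hQ u v).isUnit_one_sub

end FactorsThroughInjective

section Arrows

variable {C : Type*} [Category C] [Preadditive C] [HasBinaryBiproducts C]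

theorem isIso_biprod_lift_snd {B I D : C} (h : B ⊞ I ⟶ D) [IsIso (biprod.inl ≫ h)] :
    IsIso (biprod.lift h biprod.snd) := by
  have : biprod.lift h biprod.snd =
      (biprod.mapIso (asIso (biprod.inl ≫ h)) (Iso.refl I) ≪≫
        Biprod.unipotentLower (biprod.inr ≫ h)).hom := by
    ext <;> simp
  rw [this]
  infer_instance

noncomputable def arrowBiprodLiftIso {A B I M D : C} (f : A ⟶ B) (e : A ⟶ I) (g : M ⟶ D) (α : A ≅ M)
    (h : B ⊞ I ⟶ D) [IsIso (biprod.inl ≫ h)] (w : biprod.lift f e ≫ h = α.hom ≫ g) :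
    Arrow.mk (biprod.lift f e) ≅ Arrow.mk (biprod.lift g (α.inv ≫ e)) :=
  have := isIso_biprod_lift_snd h
  Arrow.isoMk α (asIso (biprod.lift h biprod.snd)) (by apply biprod.hom_ext <;> simp [w])

end Arrows

instance ModuleCat.finite_biprod {Λ : Type u} [Ring Λ] (B I : ModuleCat.{u} Λ)
    [Module.Finite Λ B] [Module.Finite Λ I] : Module.Finite Λ ↑(B ⊞ I) :=
  Module.Finite.equiv (ModuleCat.biprodIsoProd B I).symm.toLinearEquiv

theorem mimo_arrows_isomorphic_general
    (k : Type u) [Field k] (Λ : Type u) [Ring Λ] [Algebra k Λ] [FiniteDimensional k Λ]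
    {A B M D I : ModuleCat.{u} Λ}
    (hB : Module.Finite Λ B) (hIfin : Module.Finite Λ I)
    (hBinj : NoInjectiveSummand B)
    (f : A ⟶ B) (g : M ⟶ D) (a : A ⟶ M) (a' : M ⟶ A) (b : B ⟶ D) (b' : D ⟶ B)
    (ha : a ≫ a' = 𝟙 A) (ha' : a' ≫ a = 𝟙 M)
    (hb : b ≫ b' = 𝟙 B) (hb' : b' ≫ b = 𝟙 D)
    (hfac : ∃ (Q : ModuleCat.{u} Λ), Module.Finite Λ Q ∧ InjectiveMod Q ∧
      ∃ (t : A ⟶ Q) (s : Q ⟶ D), f ≫ b - a ≫ g = t ≫ s)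
    (e : A ⟶ I)
    (hmono : Function.Injective (biprod.lift f e)) :
    Nonempty (Arrow.mk (biprod.lift f e) ≅ Arrow.mk (biprod.lift g (a' ≫ e))) := by
  have := IsArtinianRing.of_finite k Λ
  obtain ⟨Q, hQfin, hQ, t, s, hts⟩ := hfac
  obtain ⟨τ, hτ⟩ := hQ.exists_extension (biprod.lift f e) hmono t
  have : IsIso b := ⟨b', hb, hb'⟩
  have : IsIso (biprod.inl ≫ (biprod.fst ≫ b - τ ≫ s)) := by
    have hfactor : biprod.inl ≫ (biprod.fst ≫ b - τ ≫ s) =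
        (𝟙 B - (biprod.inl ≫ τ) ≫ s ≫ b') ≫ b := by
      simp [hb']
    have := isIso_one_sub_comp_of_noInjectiveSummand hBinj hQ (biprod.inl ≫ τ) (s ≫ b')
    rw [hfactor]
    infer_instance
  refine ⟨arrowBiprodLiftIso f e g ⟨a, a', ha, ha'⟩ (biprod.fst ≫ b - τ ≫ s) ?_⟩
  rw [Preadditive.comp_sub, biprod.lift_fst_assoc, reassoc_of% hτ, ← hts]
  abel

/-- **Statement 14.** Let `f : A → B`, `g : C → D` with `B` having no nonzero injective
summand, `a, b` isomorphisms with `b∘f − g∘a` factoring through an injective, and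
`(f,e)ᵗ : A → B ⊕ I` injective with `I` injective. Then `(f,e)ᵗ ≅ (g, e∘a⁻¹)ᵗ` as objects of
the arrow category of `mod Λ`. -/
theorem mimo_arrows_isomorphic
    (k : Type u) [Field k] (Λ : Type u) [Ring Λ] [Algebra k Λ] [FiniteDimensional k Λ]
    {A B M D I : ModuleCat.{u} Λ}
    (hA : Module.Finite Λ A) (hB : Module.Finite Λ B) (hM : Module.Finite Λ M)
    (hD : Module.Finite Λ D) (hIfin : Module.Finite Λ I)
    (hBinj : NoInjectiveSummand B)
    (f : A ⟶ B) (g : M ⟶ D) (a : A ⟶ M) (a' : M ⟶ A) (b : B ⟶ D) (b' : D ⟶ B)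
    (ha : a ≫ a' = 𝟙 A) (ha' : a' ≫ a = 𝟙 M)
    (hb : b ≫ b' = 𝟙 B) (hb' : b' ≫ b = 𝟙 D)
    (hfac : ∃ (Q : ModuleCat.{u} Λ), Module.Finite Λ Q ∧ InjectiveMod Q ∧
      ∃ (t : A ⟶ Q) (s : Q ⟶ D), f ≫ b - a ≫ g = t ≫ s)
    (hI : InjectiveMod I) (e : A ⟶ I)
    (hmono : Function.Injective (biprod.lift f e)) :
    Nonempty (Arrow.mk (biprod.lift f e) ≅ Arrow.mk (biprod.lift g (a' ≫ e))) :=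
  mimo_arrows_isomorphic_general k Λ hB hIfin hBinj f g a a' b b' ha ha' hb hb' hfac e hmono
end
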